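/- arXiv:2601.02811 — 9 statements merged into one kernel-verified Lean document; each statement's English description precedes it below -/
import Mathlib

section
/- Let (Ω, 𝒜, P) be a probability space and f : Ω → ℝ a measurable function such that ω ↦ exp(t·f(ω)) is P-integrable for all t in some open interval around 0. Let m := ∫ f dP and σ² := Var_P(f). For C > 0 define the robust value S_f(C) := sSup { ∫ f dQ : Q a probability measure on Ω with Q ≪ P and KL(Q‖P) ≤ C }. Then the function C ↦ (S_f(C) − m)/√C tends to √(2·σ²) as C → 0 from the right (i.e. along the filter 𝓝[>] 0); equivalently, S_f(C) = m + √(2·Var_P(f))·√C + o(√C) as C ↓ 0. -/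
open MeasureTheory ProbabilityTheory Filter Real
open scoped Classical

/-- Kullback--Leibler divergence of `Q` from `P`: `∫ log (dQ/dP) dQ` when `Q ≪ P` and the
log-likelihood ratio is `Q`-integrable, and `⊤` otherwise. -/
noncomputable def klDiv {Ω : Type*} [MeasurableSpace Ω] (Q P : Measure Ω) : EReal :=
  if Q ≪ P ∧ Integrable (llr Q P) Q then ((∫ ω, llr Q P ω ∂Q : ℝ) : EReal) else ⊤

/-- The KL-ball robust value `S_f(C)`: the supremum of `∫ f dQ` over probability measures
`Q ≪ P` with `KL(Q‖P) ≤ C`. -/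
noncomputable def robustValue {Ω : Type*} [MeasurableSpace Ω] (P : Measure Ω) (f : Ω → ℝ)
    (C : ℝ) : ℝ :=
  sSup { x : ℝ | ∃ Q : Measure Ω, IsProbabilityMeasure Q ∧ Q ≪ P ∧
    klDiv Q P ≤ (C : EReal) ∧ x = ∫ ω, f ω ∂Q }

/-!
Write `Λ = cgf f P`, `m = ∫ f dP` and `σ² = Var_P(f)`. By the Donsker–Varadhan inequality
`t ∫ f dQ ≤ KL(Q‖P) + Λ(t)`, every admissible `Q` satisfies `∫ f dQ ≤ (C + Λ(t)) / t` for all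
small `t > 0`. Conversely, the tilted measure `P_t ∝ exp (t f) P` has mean `Λ'(t)` and divergence
`t Λ'(t) - Λ(t)`. Since `Λ` is analytic at `0` with `Λ(0) = 0`, `Λ'(0) = m` and `Λ''(0) = σ²`,
the choice `t = c √C` gives `(S_f(C) - m) / √C ≤ 1/c + c σ²/2 + o(1)` for every `c > 0`, and
`≥ σ² a + o(1)` whenever `σ² a² < 2` (then `P_t` lies in the KL ball). Optimising over `c` and
`a` gives `√(2σ²)` from both sides.
-/

open Topology

lemma mul_le_mul_log_sub_add_exp {u : ℝ} (hu : 0 ≤ u) (v : ℝ) :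
    u * v ≤ u * log u - u + exp v := by
  rcases hu.eq_or_lt with rfl | hu
  · simp [(exp_pos v).le]
  · have h := add_one_le_exp (v - log u)
    rw [exp_sub, exp_log hu] at h
    have := (le_div_iff₀ hu).1 h
    nlinarith

lemma tendsto_sub_sub_deriv_mul_div_sq {g : ℝ → ℝ} {a : ℝ}
    (hg : ∀ᶠ t in 𝓝 0, DifferentiableAt ℝ g t) (h2 : HasDerivAt (deriv g) a 0) :
    Tendsto (fun t ↦ (g t - g 0 - deriv g 0 * t) / t ^ 2) (𝓝[≠] 0) (𝓝 (a / 2)) := by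
  have hslope : Tendsto (fun t ↦ (deriv g t - deriv g 0) / (2 * t)) (𝓝[≠] 0) (𝓝 (a / 2)) := by
    refine ((hasDerivAt_iff_tendsto_slope.1 h2).div_const 2).congr fun t ↦ ?_
    rw [slope_def_field, sub_zero, div_div, mul_comm]
  have hcont : ContinuousAt (fun t ↦ g t - g 0 - deriv g 0 * t) 0 :=
    (hg.self_of_nhds.continuousAt.sub continuousAt_const).sub (continuousAt_id.const_mul _)
  refine HasDerivAt.lhopital_zero_nhdsNE (f' := fun t ↦ deriv g t - deriv g 0)
    (g' := fun t ↦ 2 * t) ?_ ?_ ?_ ?_ ?_ hslope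
  · filter_upwards [nhdsWithin_le_nhds hg] with t ht
    simpa using (ht.hasDerivAt.sub_const (g 0)).fun_sub ((hasDerivAt_id t).const_mul (deriv g 0))
  · exact .of_forall fun t ↦ by simpa using hasDerivAt_pow 2 t
  · filter_upwards [self_mem_nhdsWithin] with t ht
    exact mul_ne_zero two_ne_zero ht
  · simpa using hcont.tendsto.mono_left nhdsWithin_le_nhds
  · simpa using ((continuous_pow 2).tendsto (0 : ℝ)).mono_left nhdsWithin_le_nhds

lemma tendsto_const_mul_sqrt_nhdsGT {a : ℝ} (ha : 0 < a) :
    Tendsto (fun C ↦ a * √C) (𝓝[>] 0) (𝓝[>] 0) := by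
  refine tendsto_nhdsWithin_of_tendsto_nhds_of_eventually_within _ ?_ ?_
  · simpa using ((continuous_sqrt.tendsto 0).const_mul a).mono_left nhdsWithin_le_nhds
  · filter_upwards [self_mem_nhdsWithin] with C hC
    exact mul_pos ha (sqrt_pos.2 hC)

lemma eventually_mem_interior_integrableExpSet {Ω : Type*} [MeasurableSpace Ω] {μ : Measure Ω}
    {X : Ω → ℝ} (h0 : 0 ∈ interior (integrableExpSet X μ)) :
    ∀ᶠ t in 𝓝[>] (0 : ℝ), t ∈ interior (integrableExpSet X μ) ∧
      -t ∈ interior (integrableExpSet X μ) := by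
  have h := isOpen_interior.mem_nhds h0
  exact nhdsWithin_le_nhds <| (Filter.eventually_of_mem h fun _ ↦ id).and <|
    (continuous_neg.tendsto' 0 0 neg_zero).eventually_mem h

section KullbackLeibler

variable {Ω : Type*} [MeasurableSpace Ω] {Q P : Measure Ω} {g : Ω → ℝ}

/-- Young's inequality `D |g| ≤ D log D - D + exp |g|` for the density `D = dQ/dP`. -/
lemma integrable_of_integrable_llr [IsFiniteMeasure Q] [SigmaFinite P] (hQP : Q ≪ P)
    (hllr : Integrable (llr Q P) Q) (hg : AEStronglyMeasurable g P)
    (hexp : Integrable (fun ω ↦ exp |g ω|) P) : Integrable g Q := by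
  rw [← integrable_rnDeriv_smul_iff hQP]
  have hbound : Integrable (fun ω ↦ (Q.rnDeriv P ω).toReal * log (Q.rnDeriv P ω).toReal
      - (Q.rnDeriv P ω).toReal + exp |g ω|) P :=
    (((integrable_rnDeriv_mul_log_iff hQP).2 hllr).sub Measure.integrable_toReal_rnDeriv).add hexp
  refine hbound.mono' ((Measure.measurable_rnDeriv Q P).ennreal_toReal.aestronglyMeasurable.smul hg)
    (ae_of_all _ fun ω ↦ ?_)
  rw [norm_smul, Real.norm_eq_abs, Real.norm_eq_abs, abs_of_nonneg ENNReal.toReal_nonneg]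
  exact mul_le_mul_log_sub_add_exp ENNReal.toReal_nonneg _

/-- Donsker–Varadhan: Gibbs' inequality for `Q` against the tilted measure `P.tilted g`. -/
lemma integral_le_integral_llr_add_log_integral_exp [IsProbabilityMeasure Q]
    [IsProbabilityMeasure P] (hQP : Q ≪ P) (hllr : Integrable (llr Q P) Q)
    (hgQ : Integrable g Q) (hgP : Integrable (fun ω ↦ exp (g ω)) P) :
    ∫ ω, g ω ∂Q ≤ ∫ ω, llr Q P ω ∂Q + log (∫ ω, exp (g ω) ∂P) := by
  have : IsProbabilityMeasure (P.tilted g) := isProbabilityMeasure_tilted hgP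
  have hgibbs := InformationTheory.integral_llr_add_sub_measure_univ_nonneg
    (hQP.trans (absolutelyContinuous_tilted hgP)) (integrable_llr_tilted_right hQP hgQ hllr hgP)
  rw [integral_llr_tilted_right hQP hgQ hgP hllr] at hgibbs
  simp only [probReal_univ] at hgibbs
  linarith

lemma klDiv_le_coe_iff {C : ℝ} :
    klDiv Q P ≤ (C : EReal) ↔ Q ≪ P ∧ Integrable (llr Q P) Q ∧ ∫ ω, llr Q P ω ∂Q ≤ C := by
  by_cases h : Q ≪ P ∧ Integrable (llr Q P) Q
  · simp [klDiv, h]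
  · simp only [klDiv, if_neg h, top_le_iff, EReal.coe_ne_top, false_iff]
    tauto

lemma klDiv_self_le [SigmaFinite P] {C : ℝ} (hC : 0 ≤ C) : klDiv P P ≤ (C : EReal) := by
  refine klDiv_le_coe_iff.2 ⟨.rfl, (integrable_zero _ _ P).congr (llr_self P).symm, ?_⟩
  simpa [integral_congr_ae (llr_self P)] using hC

end KullbackLeibler

section RobustValue

variable {Ω : Type*} [MeasurableSpace Ω] {P : Measure Ω} [IsProbabilityMeasure P] {f : Ω → ℝ}
  {t C : ℝ}

lemma klDiv_tilted_mul_le_iff (ht : t ∈ interior (integrableExpSet f P)) :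
    klDiv (P.tilted (t * f ·)) P ≤ (C : EReal) ↔
      t * deriv (cgf f P) t - cgf f P t ≤ C := by
  have hexp : Integrable (fun ω ↦ exp (t * f ω)) P :=
    interior_subset (s := integrableExpSet f P) ht
  have hllr : llr (P.tilted (t * f ·)) P =ᵐ[P.tilted (t * f ·)] fun ω ↦ t * f ω - cgf f P t :=
    (tilted_absolutelyContinuous P _).ae_le (log_rnDeriv_tilted_left_self hexp)
  have : IsProbabilityMeasure (P.tilted (t * f ·)) := isProbabilityMeasure_tilted hexp
  have hf : Integrable f (P.tilted (t * f ·)) := memLp_one_iff_integrable.1 (memLp_tilted_mul ht 1)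
  rw [klDiv_le_coe_iff, integral_congr_ae hllr, integral_sub (hf.const_mul t) (integrable_const _),
    integral_const_mul, integral_tilted_mul_self ht, integral_const, probReal_univ, one_smul,
    integrable_congr hllr]
  exact ⟨fun h ↦ h.2.2, fun h ↦ ⟨tilted_absolutelyContinuous P _,
    (hf.const_mul t).sub (integrable_const _), h⟩⟩

lemma integral_le_of_klDiv_le (ht : 0 < t) (hexp : t ∈ integrableExpSet f P)
    (hexp_neg : -t ∈ integrableExpSet f P) {Q : Measure Ω} [IsProbabilityMeasure Q]
    (hQ : klDiv Q P ≤ (C : EReal)) :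
    ∫ ω, f ω ∂Q ≤ (C + cgf f P t) / t := by
  obtain ⟨hQP, hllr, hKL⟩ := klDiv_le_coe_iff.1 hQ
  have hf : AEMeasurable f P := aemeasurable_of_integrable_exp_mul (by linarith) hexp hexp_neg
  have habs : Integrable (fun ω ↦ exp |t * f ω|) P := by
    simpa [abs_mul, abs_of_pos ht] using integrable_exp_mul_abs hexp hexp_neg
  have hDV := integral_le_integral_llr_add_log_integral_exp hQP hllr
    (integrable_of_integrable_llr hQP hllr (hf.const_mul t).aestronglyMeasurable habs) hexp
  rw [integral_const_mul] at hDV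
  rw [le_div_iff₀ ht, cgf, mgf]
  linarith

lemma integral_le_robustValue (h0 : 0 ∈ interior (integrableExpSet f P)) {Q : Measure Ω}
    [IsProbabilityMeasure Q] (hQ : klDiv Q P ≤ (C : EReal)) :
    ∫ ω, f ω ∂Q ≤ robustValue P f C := by
  obtain ⟨s, ⟨hs, hs_neg⟩, hs_pos⟩ :=
    ((eventually_mem_interior_integrableExpSet h0).and self_mem_nhdsWithin).exists
  refine le_csSup ⟨(C + cgf f P s) / s, ?_⟩ ⟨Q, inferInstance, (klDiv_le_coe_iff.1 hQ).1, hQ, rfl⟩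
  rintro _ ⟨Q', _, -, hQ', rfl⟩
  exact integral_le_of_klDiv_le hs_pos (interior_subset hs) (interior_subset hs_neg) hQ'

lemma robustValue_le (hC : 0 ≤ C) (ht : 0 < t) (hexp : t ∈ integrableExpSet f P)
    (hexp_neg : -t ∈ integrableExpSet f P) :
    robustValue P f C ≤ (C + cgf f P t) / t := by
  refine csSup_le ⟨_, P, inferInstance, .rfl, klDiv_self_le hC, rfl⟩ ?_
  rintro _ ⟨Q, _, -, hQ, rfl⟩
  exact integral_le_of_klDiv_le ht hexp hexp_neg hQ

lemma hasDerivAt_deriv_cgf_zero (h0 : 0 ∈ interior (integrableExpSet f P)) :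
    HasDerivAt (deriv (cgf f P)) (variance f P) 0 := by
  have h := (analyticAt_cgf h0).deriv.differentiableAt.hasDerivAt
  rw [← iteratedDeriv_one, ← iteratedDeriv_succ, ← variance_tilted_mul h0] at h
  simpa [iteratedDeriv_one] using h

lemma deriv_cgf_zero_eq_integral (h0 : 0 ∈ interior (integrableExpSet f P)) :
    deriv (cgf f P) 0 = ∫ ω, f ω ∂P := by
  simp [deriv_cgf_zero h0]

lemma tendsto_deriv_cgf_sub_div (h0 : 0 ∈ interior (integrableExpSet f P)) :
    Tendsto (fun t ↦ (deriv (cgf f P) t - ∫ ω, f ω ∂P) / t) (𝓝[≠] 0) (𝓝 (variance f P)) := by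
  refine (hasDerivAt_iff_tendsto_slope.1 (hasDerivAt_deriv_cgf_zero h0)).congr fun t ↦ ?_
  rw [slope_def_field, sub_zero, deriv_cgf_zero_eq_integral h0]

lemma tendsto_cgf_sub_div_sq (h0 : 0 ∈ interior (integrableExpSet f P)) :
    Tendsto (fun t ↦ (cgf f P t - (∫ ω, f ω ∂P) * t) / t ^ 2) (𝓝[≠] 0)
      (𝓝 (variance f P / 2)) := by
  have hdiff : ∀ᶠ t in 𝓝 0, DifferentiableAt ℝ (cgf f P) t :=
    (analyticAt_cgf h0).eventually_analyticAt.mono fun _ h ↦ h.differentiableAt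
  simpa [cgf_zero, deriv_cgf_zero_eq_integral h0] using
    tendsto_sub_sub_deriv_mul_div_sq hdiff (hasDerivAt_deriv_cgf_zero h0)

lemma eventually_robustValue_sub_div_sqrt_lt_of_lt (h0 : 0 ∈ interior (integrableExpSet f P))
    {c u : ℝ} (hc : 0 < c) (hu : 1 / c + c * (variance f P / 2) < u) :
    ∀ᶠ C in 𝓝[>] 0, (robustValue P f C - ∫ ω, f ω ∂P) / √C < u := by
  set m := ∫ ω, f ω ∂P
  have ht := tendsto_const_mul_sqrt_nhdsGT hc
  have hlim : Tendsto (fun C ↦ 1 / c + c * ((cgf f P (c * √C) - m * (c * √C)) / (c * √C) ^ 2))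
      (𝓝[>] 0) (𝓝 (1 / c + c * (variance f P / 2))) :=
    tendsto_const_nhds.add <| ((tendsto_cgf_sub_div_sq h0).comp <|
      ht.mono_right (nhdsWithin_mono _ fun _ hx ↦ ne_of_gt hx)).const_mul c
  filter_upwards [hlim.eventually_lt_const hu, ht.eventually
    (eventually_mem_interior_integrableExpSet h0), self_mem_nhdsWithin] with C hlt hI hC
  have hr : 0 < √C := sqrt_pos.2 hC
  calc (robustValue P f C - m) / √C
      ≤ ((C + cgf f P (c * √C)) / (c * √C) - m) / √C := by
        gcongr
        exact robustValue_le (le_of_lt hC) (mul_pos hc hr) (interior_subset hI.1)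
          (interior_subset hI.2)
    _ = 1 / c + c * ((cgf f P (c * √C) - m * (c * √C)) / (c * √C) ^ 2) := by
        nth_rw 1 [← sq_sqrt (le_of_lt hC)]
        field_simp
        ring
    _ < u := hlt

lemma eventually_lt_robustValue_sub_div_sqrt_of_lt (h0 : 0 ∈ interior (integrableExpSet f P))
    {a l : ℝ} (ha : 0 < a) (haV : variance f P * a ^ 2 < 2) (hl : l < variance f P * a) :
    ∀ᶠ C in 𝓝[>] 0, l < (robustValue P f C - ∫ ω, f ω ∂P) / √C := by
  set m := ∫ ω, f ω ∂P
  set V := variance f P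
  have ht := tendsto_const_mul_sqrt_nhdsGT ha
  have ht' : Tendsto (fun C ↦ a * √C) (𝓝[>] 0) (𝓝[≠] 0) :=
    ht.mono_right (nhdsWithin_mono _ fun _ hx ↦ ne_of_gt hx)
  have hmean : Tendsto (fun C ↦ a * ((deriv (cgf f P) (a * √C) - m) / (a * √C)))
      (𝓝[>] 0) (𝓝 (a * V)) := ((tendsto_deriv_cgf_sub_div h0).comp ht').const_mul a
  have hKL : Tendsto (fun C ↦ a ^ 2 * ((deriv (cgf f P) (a * √C) - m) / (a * √C)
      - (cgf f P (a * √C) - m * (a * √C)) / (a * √C) ^ 2)) (𝓝[>] 0) (𝓝 (a ^ 2 * (V - V / 2))) :=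
    (((tendsto_deriv_cgf_sub_div h0).comp ht').sub
      ((tendsto_cgf_sub_div_sq h0).comp ht')).const_mul _
  filter_upwards [hmean.eventually_const_lt (by linarith),
    hKL.eventually_lt_const (show a ^ 2 * (V - V / 2) < 1 by linarith),
    ht.eventually (eventually_mem_interior_integrableExpSet h0), self_mem_nhdsWithin]
    with C hgain hKL_lt hI hC
  have hr : 0 < √C := sqrt_pos.2 hC
  have hC2 : √C ^ 2 = C := sq_sqrt (le_of_lt hC)
  set t := a * √C with ht_def
  have ht0 : t ≠ 0 := (mul_pos ha hr).ne'
  have htC : t ^ 2 = a ^ 2 * C := by rw [ht_def, mul_pow, hC2]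
  have hklDiv : klDiv (P.tilted (t * f ·)) P ≤ (C : EReal) := by
    refine (klDiv_tilted_mul_le_iff hI.1).2 ?_
    have : t * deriv (cgf f P) t - cgf f P t = C * (a ^ 2 * ((deriv (cgf f P) t - m) / t
        - (cgf f P t - m * t) / t ^ 2)) := by
      field_simp
      linear_combination (t * deriv (cgf f P) t - cgf f P t) * htC
    rw [this]
    exact mul_le_of_le_one_right (le_of_lt hC) hKL_lt.le
  have : IsProbabilityMeasure (P.tilted (t * f ·)) :=
    isProbabilityMeasure_tilted (interior_subset (s := integrableExpSet f P) hI.1)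
  have hS := integral_le_robustValue h0 hklDiv
  rw [integral_tilted_mul_self hI.1] at hS
  calc l < a * ((deriv (cgf f P) t - m) / t) := hgain
    _ = (deriv (cgf f P) t - m) / √C := by rw [ht_def]; field_simp
    _ ≤ (robustValue P f C - m) / √C := by gcongr

lemma eventually_robustValue_sub_div_sqrt_lt (h0 : 0 ∈ interior (integrableExpSet f P)) {u : ℝ}
    (hu : √(2 * variance f P) < u) :
    ∀ᶠ C in 𝓝[>] 0, (robustValue P f C - ∫ ω, f ω ∂P) / √C < u := by
  have hu0 : 0 < u := (sqrt_nonneg _).trans_lt hu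
  have hVu : 2 * variance f P < u ^ 2 := (sqrt_lt' hu0).1 hu
  refine eventually_robustValue_sub_div_sqrt_lt_of_lt h0 (c := 2 / u) (by positivity) ?_
  rw [← sub_pos]
  field_simp
  nlinarith

lemma eventually_lt_robustValue_sub_div_sqrt (h0 : 0 ∈ interior (integrableExpSet f P)) {l : ℝ}
    (hl : l < √(2 * variance f P)) :
    ∀ᶠ C in 𝓝[>] 0, l < (robustValue P f C - ∫ ω, f ω ∂P) / √C := by
  rcases (variance_nonneg f P).eq_or_lt with hV | hV
  · rw [← hV, mul_zero, sqrt_zero] at hl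
    exact eventually_lt_robustValue_sub_div_sqrt_of_lt h0 one_pos (by simp [← hV])
      (by simpa [← hV] using hl)
  · obtain ⟨l', hl', hl's⟩ := exists_between (max_lt hl (sqrt_pos.2 (by positivity)))
    have hl'0 : 0 < l' := (le_max_right _ _).trans_lt hl'
    have hl'V : l' ^ 2 < 2 * variance f P := (lt_sqrt hl'0.le).1 hl's
    refine eventually_lt_robustValue_sub_div_sqrt_of_lt h0 (a := l' / variance f P)
      (by positivity) ?_ ?_
    · field_simp
      linarith
    · field_simp
      exact (le_max_left _ _).trans_lt hl'

end RobustValue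

theorem sharp_small_KL_expansion_general {Ω : Type*} [MeasurableSpace Ω] (P : Measure Ω)
    [IsProbabilityMeasure P] (f : Ω → ℝ)
    (hmgf : ∃ ε > 0, ∀ t : ℝ, |t| < ε → Integrable (fun ω => Real.exp (t * f ω)) P) :
    Tendsto (fun C : ℝ => (robustValue P f C - ∫ ω, f ω ∂P) / Real.sqrt C)
      (nhdsWithin 0 (Set.Ioi 0)) (nhds (Real.sqrt (2 * variance f P))) := by
  obtain ⟨ε, hε, hint⟩ := hmgf
  have h0 : 0 ∈ interior (integrableExpSet f P) := mem_interior.2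
    ⟨Metric.ball 0 ε, fun t ht ↦ hint t (by simpa using ht), Metric.isOpen_ball,
      Metric.mem_ball_self hε⟩
  exact tendsto_order.2 ⟨fun l hl ↦ eventually_lt_robustValue_sub_div_sqrt h0 hl,
    fun u hu ↦ eventually_robustValue_sub_div_sqrt_lt h0 hu⟩

/-- Sharp small-KL expansion: `S_f(C) = m + √(2 Var_P f) √C + o(√C)` as `C ↓ 0`. -/
theorem sharp_small_KL_expansion {Ω : Type*} [MeasurableSpace Ω] (P : Measure Ω)
    [IsProbabilityMeasure P] (f : Ω → ℝ) (hf : Measurable f)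
    (hmgf : ∃ ε > 0, ∀ t : ℝ, |t| < ε → Integrable (fun ω => Real.exp (t * f ω)) P) :
    Tendsto (fun C : ℝ => (robustValue P f C - ∫ ω, f ω ∂P) / Real.sqrt C)
      (nhdsWithin 0 (Set.Ioi 0)) (nhds (Real.sqrt (2 * variance f P))) :=
  sharp_small_KL_expansion_general P f hmgf
end

section
/- Fix c > 0 and λ ∈ ℝ with |λ| < c. For n : ℕ define D_n := (n·(n−2)/4)·kl((c+λ)/n, c/n) + (n²/4)·kl((c−λ)/n, c/n) (real-valued, with n cast to ℝ). Then D_n/n converges, as n → ∞ (Filter.atTop), to I(λ) := (1/4)·[(c+λ)·log((c+λ)/c) + (c−λ)·log((c−λ)/c)]. Equivalently, the Kullback–Leibler divergence between the sparse two-block SBM with within/between edge probabilities (c±λ)/n and the sparse Erdős–Rényi model with edge probability c/n satisfies D_n = I(λ)·n + o(n). -/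
open Filter Real

/-- Bernoulli Kullback--Leibler divergence `kl(p,q) = p log(p/q) + (1−p) log((1−p)/(1−q))`. -/
noncomputable def bernKL (p q : ℝ) : ℝ :=
  p * Real.log (p / q) + (1 - p) * Real.log ((1 - p) / (1 - q))

/-! With `p = a/n`, `q = c/n` the first term of `n · kl(p, q)` is exactly `a log (a/c)`, and
since `n log (1 - a/n) → -a` the second tends to `c - a`. The block weights `(n-2)/n` and `n/n`
tend to `1`, and the linear terms `c - (c ± λ)` cancel in the sum. -/

lemma tendsto_natCast_mul_log_one_sub_div (a : ℝ) :
    Tendsto (fun n : ℕ => (n : ℝ) * log (1 - a / n)) atTop (nhds (-a)) := by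
  refine ((tendsto_mul_log_one_add_div_atTop (-a)).comp tendsto_natCast_atTop_atTop).congr ?_
  intro n
  simp only [Function.comp_apply, neg_div, ← sub_eq_add_neg]

lemma tendsto_one_sub_div_natCast (b : ℝ) :
    Tendsto (fun n : ℕ => 1 - b / (n : ℝ)) atTop (nhds 1) := by
  simpa using tendsto_const_nhds.sub
    ((tendsto_const_nhds (x := b)).div_atTop tendsto_natCast_atTop_atTop)

lemma natCast_mul_bernKL_div {a c : ℝ} {n : ℕ} (hn : n ≠ 0) (ha : 1 - a / n ≠ 0)
    (hc : 1 - c / n ≠ 0) :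
    (n : ℝ) * bernKL (a / n) (c / n) =
      a * log (a / c) + (1 - a / n) * (n * log (1 - a / n) - n * log (1 - c / n)) := by
  have hn' : (n : ℝ) ≠ 0 := Nat.cast_ne_zero.mpr hn
  rw [bernKL, div_div_div_cancel_right₀ hn', log_div ha hc]
  field_simp

lemma tendsto_natCast_mul_bernKL_div (a c : ℝ) :
    Tendsto (fun n : ℕ => (n : ℝ) * bernKL (a / n) (c / n)) atTop
      (nhds (a * log (a / c) + (c - a))) := by
  have hlim := (tendsto_const_nhds (x := a * log (a / c))).add
    ((tendsto_one_sub_div_natCast a).mul ((tendsto_natCast_mul_log_one_sub_div a).sub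
      (tendsto_natCast_mul_log_one_sub_div c)))
  rw [show a * log (a / c) + 1 * (-a - -c) = a * log (a / c) + (c - a) by ring] at hlim
  refine hlim.congr' ?_
  filter_upwards [eventually_ne_atTop 0, (tendsto_one_sub_div_natCast a).eventually_ne one_ne_zero,
    (tendsto_one_sub_div_natCast c).eventually_ne one_ne_zero] with n hn ha hc
  exact (natCast_mul_bernKL_div hn ha hc).symm

theorem sbm_er_kl_per_vertex_general (c lam : ℝ) :
    Tendsto
      (fun n : ℕ =>
        (((n : ℝ) * ((n : ℝ) - 2) / 4) * bernKL ((c + lam) / n) (c / n) +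
          ((n : ℝ) ^ 2 / 4) * bernKL ((c - lam) / n) (c / n)) / (n : ℝ))
      atTop
      (nhds ((1 / 4) * ((c + lam) * Real.log ((c + lam) / c) +
        (c - lam) * Real.log ((c - lam) / c)))) := by
  have hlim := (((tendsto_one_sub_div_natCast 2).mul
    (tendsto_natCast_mul_bernKL_div (c + lam) c)).add
    (tendsto_natCast_mul_bernKL_div (c - lam) c)).const_mul (1 / 4)
  convert hlim.congr' ?_ using 2
  · ring
  filter_upwards [eventually_ne_atTop 0] with n hn
  have hn' : (n : ℝ) ≠ 0 := Nat.cast_ne_zero.mpr hn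
  field_simp

/-- Per-vertex KL information between the sparse two-block SBM and sparse Erdős–Rényi:
`D_n / n → I(λ)`. -/
theorem sbm_er_kl_per_vertex (c lam : ℝ) (hc : 0 < c) (hlam : |lam| < c) :
    Tendsto
      (fun n : ℕ =>
        (((n : ℝ) * ((n : ℝ) - 2) / 4) * bernKL ((c + lam) / n) (c / n) +
          ((n : ℝ) ^ 2 / 4) * bernKL ((c - lam) / n) (c / n)) / (n : ℝ))
      atTop
      (nhds ((1 / 4) * ((c + lam) * Real.log ((c + lam) / c) +
        (c - lam) * Real.log ((c - lam) / c)))) :=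
  sbm_er_kl_per_vertex_general c lam
end

section
/- Fix c > 0 and λ ∈ ℝ with |λ| < c. For n : ℕ define C_n := sup over t ∈ [0,1] of [(n²/4 − n/2)·φ(c/n, (c+λ)/n; t) + (n²/4)·φ(c/n, (c−λ)/n; t)], where φ(r,q;t) := −log(r^{1−t}·q^t + (1−r)^{1−t}·(1−q)^t) with real powers. Then C_n/n converges, as n → ∞ (Filter.atTop), to J(λ) := sup over t ∈ [0,1] of (1/4)·[2c − c^{1−t}·((c+λ)^t + (c−λ)^t)]. Equivalently, the Chernoff information between the sparse balanced two-block SBM with edge probabilities (c±λ)/n and the sparse Erdős–Rényi model with edge probability c/n satisfies C_n = J(λ)·n + o(n). -/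
/-!
Put `x = c/n`, `y = q/n`. The first term inside the logarithm of `chernoffPhi x y t` is exactly
`c^(1-t) q^t / n`, while expanding `log (1 - ·)` and `exp` shows that the second is
`1 - ((1-t) c + t q)/n + O(n⁻²)`. Hence `n · chernoffPhi (c/n) (q/n) t` equals
`(1-t) c + t q - c^(1-t) q^t + O(1/n)` uniformly in `t ∈ [0,1]`, so `C_n / n` is the supremum of
a function uniformly `O(1/n)`-close to the objective of `J(λ)`, and uniformly close functions have
close suprema.
-/

open Filter Real

/-- Per-edge Chernoff objective
`φ(r,q;t) = −log(r^(1−t) q^t + (1−r)^(1−t) (1−q)^t)` (real powers). -/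
noncomputable def chernoffPhi (r q t : ℝ) : ℝ :=
  -Real.log (r ^ (1 - t) * q ^ t + (1 - r) ^ (1 - t) * (1 - q) ^ t)

open Set

theorem abs_log_one_add_sub_self_le {z : ℝ} (hz : |z| ≤ 1 / 2) :
    |log (1 + z) - z| ≤ 2 * z ^ 2 := by
  have h := abs_log_sub_add_sum_range_le (x := -z) (by rw [abs_neg]; linarith) 1
  simp only [Finset.sum_range_one, abs_neg, sub_neg_eq_add, zero_add, pow_one, Nat.cast_zero,
    div_one, one_add_one_eq_two, sq_abs] at h
  calc |log (1 + z) - z| = |-z + log (1 + z)| := by rw [add_comm 1 z, neg_add_eq_sub, add_comm z]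
    _ ≤ z ^ 2 / (1 - |z|) := h
    _ ≤ 2 * z ^ 2 := by
      rw [div_le_iff₀ (by linarith)]
      nlinarith [sq_nonneg z]

theorem abs_one_sub_rpow_mul_one_sub_rpow_sub_le {x y t d : ℝ} (hx : 0 ≤ x) (hy : 0 ≤ y)
    (hxd : x ≤ d) (hyd : y ≤ d) (hd : d ≤ 1 / 8) (ht₀ : 0 ≤ t) (ht₁ : t ≤ 1) :
    |(1 - x) ^ (1 - t) * (1 - y) ^ t - (1 - ((1 - t) * x + t * y))| ≤ 6 * d ^ 2 := by
  set u := (1 - t) * log (1 - x) + t * log (1 - y)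
  have hexp : (1 - x) ^ (1 - t) * (1 - y) ^ t = exp u := by
    rw [rpow_def_of_pos (by linarith), rpow_def_of_pos (by linarith), ← exp_add]
    congr 1; ring
  have hlog {s : ℝ} (hs : 0 ≤ s) (hsd : s ≤ d) : |log (1 - s) + s| ≤ 2 * d ^ 2 := by
    have h := abs_log_one_add_sub_self_le (z := -s) (by rw [abs_neg, abs_of_nonneg hs]; linarith)
    rw [← sub_eq_add_neg, sub_neg_eq_add, neg_sq] at h
    exact h.trans (by gcongr)
  have hu : |u + ((1 - t) * x + t * y)| ≤ 2 * d ^ 2 := by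
    have hx' := abs_le.1 (hlog hx hxd)
    have hy' := abs_le.1 (hlog hy hyd)
    rw [abs_le]
    constructor <;> nlinarith
  have hu_small : |u| ≤ 2 * d := by
    have := abs_le.1 hu
    rw [abs_le]
    constructor <;> nlinarith
  have hexp_u := abs_exp_sub_one_sub_id_le (x := u) (by linarith)
  have hu_sq : u ^ 2 ≤ 4 * d ^ 2 := by
    rw [← sq_abs]; nlinarith [abs_nonneg u]
  rw [hexp]
  calc |exp u - (1 - ((1 - t) * x + t * y))|
      = |(exp u - 1 - u) + (u + ((1 - t) * x + t * y))| := by ring_nf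
    _ ≤ |exp u - 1 - u| + |u + ((1 - t) * x + t * y)| := abs_add_le _ _
    _ ≤ 6 * d ^ 2 := by linarith

theorem div_rpow_one_sub_mul_div_rpow {c q n : ℝ} (hc : 0 ≤ c) (hq : 0 ≤ q) (hn : 0 < n) (t : ℝ) :
    (c / n) ^ (1 - t) * (q / n) ^ t = c ^ (1 - t) * q ^ t / n := by
  rw [div_rpow hc hn.le, div_rpow hq hn.le, div_mul_div_comm, ← rpow_add hn, sub_add_cancel,
    rpow_one]

theorem abs_mul_chernoffPhi_div_sub_le {c q t M n : ℝ} (hc : 0 ≤ c) (hq : 0 ≤ q)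
    (ht₀ : 0 ≤ t) (ht₁ : t ≤ 1) (hcM : c ≤ M) (hqM : q ≤ M) (hn : 0 < n) (hMn : 8 * M ≤ n) :
    |n * chernoffPhi (c / n) (q / n) t - ((1 - t) * c + t * q - c ^ (1 - t) * q ^ t)|
      ≤ 14 * M ^ 2 / n := by
  set E := (1 - t) * c + t * q - c ^ (1 - t) * q ^ t
  have hE₀ : 0 ≤ E := sub_nonneg.2 <|
    geom_mean_le_arith_mean2_weighted (by linarith) ht₀ hc hq (by ring)
  have hEM : E ≤ M := by nlinarith [mul_nonneg (rpow_nonneg hc (1 - t)) (rpow_nonneg hq t)]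
  set d := M / n
  have hd : d ≤ 1 / 8 := by rw [div_le_iff₀ hn]; linarith
  have hEd : |E / n| ≤ d := by
    rw [abs_of_nonneg (div_nonneg hE₀ hn.le)]; exact div_le_div_of_nonneg_right hEM hn.le
  set P := (1 - c / n) ^ (1 - t) * (1 - q / n) ^ t
  have hP : |P - (1 - ((1 - t) * (c / n) + t * (q / n)))| ≤ 6 * d ^ 2 :=
    abs_one_sub_rpow_mul_one_sub_rpow_sub_le (by positivity) (by positivity)
      (div_le_div_of_nonneg_right hcM hn.le) (div_le_div_of_nonneg_right hqM hn.le) hd ht₀ ht₁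
  set z := c ^ (1 - t) * q ^ t / n + P - 1
  have hz : z = -(E / n) + (P - (1 - ((1 - t) * (c / n) + t * (q / n)))) := by
    simp only [z, E]; field_simp; ring
  have hd₀ : 0 ≤ d := hEd.trans' (abs_nonneg _)
  have hz_small : |z| ≤ 2 * d := by
    rw [hz]
    calc _ ≤ |-(E / n)| + |P - (1 - ((1 - t) * (c / n) + t * (q / n)))| := abs_add_le _ _
      _ ≤ d + 6 * d ^ 2 := by rw [abs_neg]; gcongr
      _ ≤ 2 * d := by nlinarith
  have hlog : |log (1 + z) - z| ≤ 8 * d ^ 2 := by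
    have := abs_log_one_add_sub_self_le (z := z) (by linarith)
    nlinarith [sq_abs z, abs_nonneg z]
  have hphi : chernoffPhi (c / n) (q / n) t = -log (1 + z) := by
    rw [chernoffPhi, div_rpow_one_sub_mul_div_rpow hc hq hn]
    congr 2; ring
  calc |n * chernoffPhi (c / n) (q / n) t - E|
      = n * |(log (1 + z) - z) + (P - (1 - ((1 - t) * (c / n) + t * (q / n))))| := by
        rw [hphi, ← abs_of_pos hn, ← abs_mul, ← abs_neg, abs_of_pos hn, hz]
        congr 1; field_simp; ring
    _ ≤ n * (8 * d ^ 2 + 6 * d ^ 2) := by gcongr; exact (abs_add_le _ _).trans (by gcongr)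
    _ = 14 * M ^ 2 / n := by simp only [d]; field_simp; ring

theorem abs_chernoffPhi_div_le {c q t M n : ℝ} (hc : 0 ≤ c) (hq : 0 ≤ q)
    (ht₀ : 0 ≤ t) (ht₁ : t ≤ 1) (hcM : c ≤ M) (hqM : q ≤ M) (hn : 0 < n) (hMn : 8 * M ≤ n) :
    |chernoffPhi (c / n) (q / n) t| ≤ 3 * M / n := by
  have hM : 0 ≤ M := hc.trans hcM
  have hE : |(1 - t) * c + t * q - c ^ (1 - t) * q ^ t| ≤ M := by
    rw [abs_of_nonneg (sub_nonneg.2 <|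
      geom_mean_le_arith_mean2_weighted (by linarith) ht₀ hc hq (by ring))]
    nlinarith [mul_nonneg (rpow_nonneg hc (1 - t)) (rpow_nonneg hq t)]
  have hsq : 14 * M ^ 2 / n ≤ 2 * M := by rw [div_le_iff₀ hn]; nlinarith
  rw [le_div_iff₀ hn, ← abs_of_pos hn, ← abs_mul, abs_of_pos hn, mul_comm]
  linarith [abs_sub_abs_le_abs_sub (n * chernoffPhi (c / n) (q / n) t)
    ((1 - t) * c + t * q - c ^ (1 - t) * q ^ t),
    abs_mul_chernoffPhi_div_sub_le hc hq ht₀ ht₁ hcM hqM hn hMn]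

noncomputable def sbmChernoffObjective (c lam n t : ℝ) : ℝ :=
  (n ^ 2 / 4 - n / 2) * chernoffPhi (c / n) ((c + lam) / n) t +
    (n ^ 2 / 4) * chernoffPhi (c / n) ((c - lam) / n) t

noncomputable def sbmChernoffLimit (c lam t : ℝ) : ℝ :=
  (1 / 4) * (2 * c - c ^ (1 - t) * ((c + lam) ^ t + (c - lam) ^ t))

theorem abs_sbmChernoffObjective_div_sub_le {c lam n t : ℝ} (hlam : |lam| ≤ c) (hn : 0 < n)
    (hcn : 16 * c ≤ n) (ht₀ : 0 ≤ t) (ht₁ : t ≤ 1) :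
    |sbmChernoffObjective c lam n t / n - sbmChernoffLimit c lam t|
      ≤ (28 * c ^ 2 + 3 * c) / n := by
  obtain ⟨hl₁, hl₂⟩ := abs_le.1 hlam
  have hc : 0 ≤ c := (abs_nonneg lam).trans hlam
  have hn' : 8 * (2 * c) ≤ n := by linarith
  have h₁ := abs_mul_chernoffPhi_div_sub_le (q := c + lam) hc (by linarith) ht₀ ht₁
    (by linarith) (by linarith) hn hn'
  have h₂ := abs_mul_chernoffPhi_div_sub_le (q := c - lam) hc (by linarith) ht₀ ht₁
    (by linarith) (by linarith) hn hn'
  have h₃ := abs_chernoffPhi_div_le (q := c + lam) hc (by linarith) ht₀ ht₁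
    (by linarith) (by linarith) hn hn'
  set φ₁ := chernoffPhi (c / n) ((c + lam) / n) t
  set φ₂ := chernoffPhi (c / n) ((c - lam) / n) t
  set e₁ := (1 - t) * c + t * (c + lam) - c ^ (1 - t) * (c + lam) ^ t
  set e₂ := (1 - t) * c + t * (c - lam) - c ^ (1 - t) * (c - lam) ^ t
  -- the within-block deficit of `n / 2` pairs contributes the error term `-φ₁ / 2`
  have hsplit : sbmChernoffObjective c lam n t / n - sbmChernoffLimit c lam t
      = (n * φ₁ - e₁) / 4 + (n * φ₂ - e₂) / 4 - φ₁ / 2 := by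
    simp only [sbmChernoffObjective, sbmChernoffLimit, φ₁, φ₂, e₁, e₂]
    field_simp; ring
  rw [hsplit]
  calc |(n * φ₁ - e₁) / 4 + (n * φ₂ - e₂) / 4 - φ₁ / 2|
      ≤ |n * φ₁ - e₁| / 4 + |n * φ₂ - e₂| / 4 + |φ₁| / 2 := by
        refine (abs_sub _ _).trans ?_
        rw [abs_div, abs_two]
        gcongr
        refine (abs_add_le _ _).trans ?_
        rw [abs_div, abs_div, abs_of_pos (by norm_num : (0 : ℝ) < 4)]
    _ ≤ 14 * (2 * c) ^ 2 / n / 4 + 14 * (2 * c) ^ 2 / n / 4 + 3 * (2 * c) / n / 2 := by gcongr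
    _ = (28 * c ^ 2 + 3 * c) / n := by ring

theorem abs_csSup_image_sub_csSup_image_le {α : Type*} {f g : α → ℝ} {s : Set α} {ε : ℝ}
    (hs : s.Nonempty) (hg : BddAbove (g '' s)) (hfg : ∀ x ∈ s, |f x - g x| ≤ ε) :
    |sSup (f '' s) - sSup (g '' s)| ≤ ε := by
  have hf : BddAbove (f '' s) := ⟨sSup (g '' s) + ε, forall_mem_image.2 fun x hx => by
    linarith [(abs_le.1 (hfg x hx)).2, le_csSup hg (mem_image_of_mem g hx)]⟩
  have hfg' : sSup (f '' s) ≤ sSup (g '' s) + ε := csSup_le (hs.image f) <|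
    forall_mem_image.2 fun x hx => by
      linarith [(abs_le.1 (hfg x hx)).2, le_csSup hg (mem_image_of_mem g hx)]
  have hgf : sSup (g '' s) ≤ sSup (f '' s) + ε := csSup_le (hs.image g) <|
    forall_mem_image.2 fun x hx => by
      linarith [(abs_le.1 (hfg x hx)).1, le_csSup hf (mem_image_of_mem f hx)]
  rw [abs_le]
  constructor <;> linarith

theorem csSup_image_div {α : Type*} (f : α → ℝ) (s : Set α) {a : ℝ} (ha : 0 ≤ a) :
    sSup (f '' s) / a = sSup ((fun x => f x / a) '' s) := by
  rw [div_eq_inv_mul, ← smul_eq_mul, ← Real.sSup_smul_of_nonneg (inv_nonneg.2 ha),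
    ← Set.image_smul, Set.image_image]
  simp only [smul_eq_mul, div_eq_inv_mul]

theorem bddAbove_sbmChernoffLimit {c lam : ℝ} (hlam : |lam| ≤ c) :
    BddAbove (sbmChernoffLimit c lam '' Icc 0 1) := by
  obtain ⟨hl₁, hl₂⟩ := abs_le.1 hlam
  refine ⟨c / 2, forall_mem_image.2 fun t _ => ?_⟩
  have := mul_nonneg (rpow_nonneg ((abs_nonneg lam).trans hlam) (1 - t))
    (add_nonneg (rpow_nonneg (by linarith : 0 ≤ c + lam) t)
      (rpow_nonneg (by linarith : 0 ≤ c - lam) t))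
  simp only [sbmChernoffLimit]
  linarith

theorem sbm_er_chernoff_per_vertex_general (c lam : ℝ) (hlam : |lam| < c) :
    Tendsto
      (fun n : ℕ =>
        sSup ((fun t : ℝ =>
          ((n : ℝ) ^ 2 / 4 - (n : ℝ) / 2) * chernoffPhi (c / n) ((c + lam) / n) t +
            ((n : ℝ) ^ 2 / 4) * chernoffPhi (c / n) ((c - lam) / n) t) '' Set.Icc 0 1)
          / (n : ℝ))
      atTop
      (nhds (sSup ((fun t : ℝ =>
        (1 / 4) * (2 * c - c ^ (1 - t) * ((c + lam) ^ t + (c - lam) ^ t))) ''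
          Set.Icc 0 1))) := by
  set K := 28 * c ^ 2 + 3 * c
  have hclose : ∀ᶠ n : ℕ in atTop,
      ‖sSup (sbmChernoffObjective c lam n '' Icc 0 1) / n
          - sSup (sbmChernoffLimit c lam '' Icc 0 1)‖ ≤ K / n := by
    filter_upwards [eventually_gt_atTop 0, eventually_ge_atTop ⌈16 * c⌉₊] with n hn hcn
    have hn' : (0 : ℝ) < n := Nat.cast_pos.2 hn
    rw [Real.norm_eq_abs, csSup_image_div _ _ hn'.le]
    exact abs_csSup_image_sub_csSup_image_le (nonempty_Icc.2 zero_le_one)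
      (bddAbove_sbmChernoffLimit hlam.le) fun t ht =>
        abs_sbmChernoffObjective_div_sub_le hlam.le hn' (Nat.ceil_le.1 hcn) ht.1 ht.2
  exact tendsto_sub_nhds_zero_iff.1 (squeeze_zero_norm' hclose
    (tendsto_const_div_atTop_nhds_zero_nat K))

/-- Per-vertex Chernoff information between the sparse two-block SBM and sparse
Erdős–Rényi: `C_n / n → J(λ)`, where both sides are suprema over the tilt `t ∈ [0,1]`. -/
theorem sbm_er_chernoff_per_vertex (c lam : ℝ) (hc : 0 < c) (hlam : |lam| < c) :
    Tendsto
      (fun n : ℕ =>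
        sSup ((fun t : ℝ =>
          ((n : ℝ) ^ 2 / 4 - (n : ℝ) / 2) * chernoffPhi (c / n) ((c + lam) / n) t +
            ((n : ℝ) ^ 2 / 4) * chernoffPhi (c / n) ((c - lam) / n) t) '' Set.Icc 0 1)
          / (n : ℝ))
      atTop
      (nhds (sSup ((fun t : ℝ =>
        (1 / 4) * (2 * c - c ^ (1 - t) * ((c + lam) ^ t + (c - lam) ^ t))) ''
          Set.Icc 0 1))) :=
  sbm_er_chernoff_per_vertex_general c lam hlam
end

section
/- Fix c > 0, δ ∈ ℝ with c + δ > 0, and t ∈ [0,1]. Define φ(r,q;t) := −log(r^{1−t}·q^t + (1−r)^{1−t}·(1−q)^t) with real powers. Then the sequence n ↦ n·φ(c/n, (c+δ)/n; t) converges, as n → ∞ (Filter.atTop), to c + t·δ − c^{1−t}·(c+δ)^t. -/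
open Filter Real

/-!
Write `φ(c/n, (c+δ)/n; t) = F(1/n)` with `F(x) = φ(c x, (c+δ) x; t)`. Since `(c x)^(1-t) ((c+δ) x)^t`
is linear in `x`, `F` agrees on `x ≥ 0` with a function differentiable at `0`, and `F 0 = 0`, so
`n F(1/n)` is a difference quotient of `F` at `0` and tends to `F'(0) = c + tδ - c^(1-t) (c+δ)^t`.
-/

lemma HasDerivWithinAt.tendsto_natCast_mul_apply_inv {f : ℝ → ℝ} {L : ℝ} (hf₀ : f 0 = 0)
    (hf : HasDerivWithinAt f L (Set.Ioi 0) 0) :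
    Tendsto (fun n : ℕ => (n : ℝ) * f (n : ℝ)⁻¹) atTop (nhds L) := by
  have hslope := (hasDerivWithinAt_iff_tendsto_slope' (lt_irrefl 0)).mp hf
  have hinv : Tendsto (fun n : ℕ => (n : ℝ)⁻¹) atTop (nhdsWithin 0 (Set.Ioi 0)) :=
    tendsto_inv_atTop_nhdsGT_zero.comp tendsto_natCast_atTop_atTop
  refine (hslope.comp hinv).congr fun n => ?_
  simp [slope_def_field, hf₀, div_eq_mul_inv, mul_comm]

lemma chernoffPhi_mul_right {r q x : ℝ} (t : ℝ) (hr : 0 ≤ r) (hq : 0 ≤ q) (hx : 0 ≤ x) :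
    chernoffPhi (r * x) (q * x) t =
      -log (r ^ (1 - t) * q ^ t * x + (1 - r * x) ^ (1 - t) * (1 - q * x) ^ t) := by
  have hsplit : x ^ (1 - t) * x ^ t = x := by
    rw [← rpow_add' hx (by norm_num), sub_add_cancel, rpow_one]
  rw [chernoffPhi, mul_rpow hr hx, mul_rpow hq hx]
  congr 2
  linear_combination r ^ (1 - t) * q ^ t * hsplit

lemma hasDerivAt_neg_log_linear_add_rpow_mul_rpow (a r q t : ℝ) :
    HasDerivAt (fun x => -log (a * x + (1 - r * x) ^ (1 - t) * (1 - q * x) ^ t))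
      ((1 - t) * r + t * q - a) 0 := by
  have hr : HasDerivAt (fun x : ℝ => (1 - r * x) ^ (1 - t)) (-r * (1 - t)) 0 := by
    simpa using (((hasDerivAt_id (0 : ℝ)).const_mul r).const_sub 1).rpow_const
      (p := 1 - t) (by simp)
  have hq : HasDerivAt (fun x : ℝ => (1 - q * x) ^ t) (-q * t) 0 := by
    simpa using (((hasDerivAt_id (0 : ℝ)).const_mul q).const_sub 1).rpow_const
      (p := t) (by simp)
  have hinner := (((hasDerivAt_id' (x := (0 : ℝ))).const_mul a).add (hr.mul hq)).log (by simp)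
  refine hinner.neg.congr_deriv ?_
  simp only [Pi.add_apply, Pi.mul_apply, mul_zero, sub_zero, one_rpow, mul_one]
  ring

lemma hasDerivWithinAt_chernoffPhi_mul_right {r q : ℝ} (t : ℝ) (hr : 0 ≤ r) (hq : 0 ≤ q) :
    HasDerivWithinAt (fun x => chernoffPhi (r * x) (q * x) t)
      ((1 - t) * r + t * q - r ^ (1 - t) * q ^ t) (Set.Ioi 0) 0 :=
  (hasDerivAt_neg_log_linear_add_rpow_mul_rpow _ r q t).hasDerivWithinAt.congr
    (fun _ hx => chernoffPhi_mul_right t hr hq (le_of_lt hx))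
    (chernoffPhi_mul_right t hr hq le_rfl)

theorem per_edge_chernoff_limit_general (c δ t : ℝ) (hc : 0 < c) (hcδ : 0 < c + δ) :
    Tendsto (fun n : ℕ => (n : ℝ) * chernoffPhi (c / n) ((c + δ) / n) t) atTop
      (nhds (c + t * δ - c ^ (1 - t) * (c + δ) ^ t)) := by
  have hφ₀ : chernoffPhi (c * 0) ((c + δ) * 0) t = 0 := by
    rw [chernoffPhi_mul_right t hc.le hcδ.le le_rfl]
    simp
  have hlim := (hasDerivWithinAt_chernoffPhi_mul_right t hc.le hcδ.le).tendsto_natCast_mul_apply_inv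
    hφ₀
  convert hlim using 2 with n
  · simp only [div_eq_mul_inv]
  · ring

/-- Per-edge Chernoff limit: `n · φ(c/n, (c+δ)/n; t) → c + tδ − c^(1−t) (c+δ)^t`. -/
theorem per_edge_chernoff_limit (c δ t : ℝ) (hc : 0 < c) (hcδ : 0 < c + δ)
    (ht : t ∈ Set.Icc (0 : ℝ) 1) :
    Tendsto (fun n : ℕ => (n : ℝ) * chernoffPhi (c / n) ((c + δ) / n) t) atTop
      (nhds (c + t * δ - c ^ (1 - t) * (c + δ) ^ t)) :=
  per_edge_chernoff_limit_general c δ t hc hcδ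
end

section
/- Fix c > 0 and define J(λ) := sup over t ∈ [0,1] of (1/4)·[2c − c^{1−t}·((c+λ)^t + (c−λ)^t)] for |λ| < c, with real powers. Then the function λ ↦ J(λ) − λ²/(16c) is O(λ⁴) as λ → 0 (Filter.IsBigO at 𝓝 0 with respect to λ ↦ λ⁴). In particular J(λ) = λ²/(16c) + O(λ⁴) in the small-signal regime. -/
open Filter Real Asymptotics


lemma expE {z : ℝ} (hz : |z| ≤ 1) :
    |Real.exp z - (1 + z + z^2/2 + z^3/6)| ≤ |z|^4 := by
  have h := Real.exp_bound hz (n := 4) (by norm_num)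
  have hs : (∑ m ∈ Finset.range 4, z ^ m / m.factorial) = 1 + z + z^2/2 + z^3/6 := by
    simp [Finset.sum_range_succ, Nat.factorial]
  rw [hs] at h
  have : |z|^4 * ((4:ℕ).succ / ((4:ℕ).factorial * 4)) ≤ |z|^4 * 1 := by
    apply mul_le_mul_of_nonneg_left _ (by positivity)
    norm_num [Nat.factorial]
  linarith

lemma log1 {u : ℝ} (hu : |u| ≤ 1/2) : |Real.log (1 - u)| ≤ 2 * |u| := by
  have h := Real.abs_log_sub_add_sum_range_le (x := u) (lt_of_le_of_lt hu (by norm_num)) 0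
  simp only [Finset.range_zero, Finset.sum_empty, zero_add] at h
  calc |Real.log (1-u)| ≤ |u|^1 / (1 - |u|) := h
    _ ≤ 2 * |u| := by
      rw [div_le_iff₀ (by linarith)]
      nlinarith [abs_nonneg u]

lemma log2 {u : ℝ} (hu : |u| ≤ 1/2) : |Real.log (1 - u) + u| ≤ 2 * u^2 := by
  have h := Real.abs_log_sub_add_sum_range_le (x := u) (lt_of_le_of_lt hu (by norm_num)) 1
  simp only [Finset.sum_range_one, pow_one] at h
  norm_num at h
  calc |Real.log (1-u) + u| = |u + Real.log (1-u)| := by rw [add_comm]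
    _ ≤ u^2 / (1 - |u|) := h
    _ ≤ 2 * u^2 := by
      rw [div_le_iff₀ (by linarith)]
      nlinarith [abs_nonneg u, sq_nonneg u]

lemma log3 {u : ℝ} (hu : |u| ≤ 1/2) : |Real.log (1 - u) + u + u^2/2| ≤ 2 * |u|^3 := by
  have h := Real.abs_log_sub_add_sum_range_le (x := u) (lt_of_le_of_lt hu (by norm_num)) 2
  have hs : (∑ i ∈ Finset.range 2, u ^ (i+1) / (i+1)) = u + u^2/2 := by
    simp [Finset.sum_range_succ]; ring
  rw [hs] at h
  norm_num at h
  calc |Real.log (1-u) + u + u^2/2| = |(u + u^2/2) + Real.log (1-u)| := by ring_nf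
    _ ≤ |u|^3 / (1 - |u|) := h
    _ ≤ 2 * |u|^3 := by
      rw [div_le_iff₀ (by linarith)]
      nlinarith [abs_nonneg u, pow_nonneg (abs_nonneg u) 3]


lemma abs4 (P Q R S : ℝ) : |P + Q + R + S| ≤ |P| + |Q| + |R| + |S| := by
  calc |P + Q + R + S| ≤ |P + Q + R| + |S| := abs_add_le _ _
    _ ≤ |P + Q| + |R| + |S| := by linarith [abs_add_le (P + Q) R]
    _ ≤ |P| + |Q| + |R| + |S| := by linarith [abs_add_le P Q]

lemma abs5 (P Q R S T : ℝ) : |(-P) - Q - R - S - T| ≤ |P| + |Q| + |R| + |S| + |T| := by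
  calc |(-P) - Q - R - S - T| ≤ |(-P) - Q - R - S| + |T| := abs_sub _ _
    _ ≤ |(-P) - Q - R| + |S| + |T| := by linarith [abs_sub ((-P) - Q - R) S]
    _ ≤ |(-P) - Q| + |R| + |S| + |T| := by linarith [abs_sub ((-P) - Q) R]
    _ ≤ |(-P)| + |Q| + |R| + |S| + |T| := by linarith [abs_sub (-P) Q]
    _ = |P| + |Q| + |R| + |S| + |T| := by rw [abs_neg]

set_option maxHeartbeats 1600000 in
lemma core {x t a b : ℝ} (hx : |x| ≤ 1/2) (ht0 : 0 ≤ t) (ht1 : t ≤ 1)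
    (ha : |a| ≤ 2*|x|) (hb : |b| ≤ 2*|x|)
    (hr : |a - (x - x^2/2)| ≤ 2*|x|^3) (hs : |b - (-x - x^2/2)| ≤ 2*|x|^3)
    (hS1 : |a + b + x^2| ≤ 2*x^4) :
    |2 - (Real.exp (t*a) + Real.exp (t*b)) - (t - t^2) * x^2| ≤ 50 * x^4 := by
  obtain ⟨hxl, hxr⟩ := abs_le.mp hx
  have hA0 : (0:ℝ) ≤ |x| := abs_nonneg x
  have hA2 : |x|^2 = x^2 := sq_abs x
  have hA4 : |x|^4 = x^4 := by rw [← abs_pow, abs_of_nonneg (by positivity)]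
  have hx2 : x^2 ≤ 1/4 := by nlinarith
  have hx40 : (0:ℝ) ≤ x^4 := by positivity
  -- ab
  have hab : |a*b + x^2| ≤ 7*x^4 := by
    have iden : a*b + x^2 = x^4/4 + (x - x^2/2)*(b - (-x - x^2/2))
        + (a - (x - x^2/2))*(-x - x^2/2) + (a - (x - x^2/2))*(b - (-x - x^2/2)) := by ring
    have b1 : |x - x^2/2| ≤ (5/4)*|x| := by
      calc |x - x^2/2| ≤ |x| + |x^2/2| := abs_sub x (x^2/2)
        _ ≤ (5/4)*|x| := by
            rw [abs_of_nonneg (by positivity : (0:ℝ) ≤ x^2/2)]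
            nlinarith
    have b2 : |(-x - x^2/2)| ≤ (5/4)*|x| := by
      calc |(-x - x^2/2)| ≤ |(-x)| + |x^2/2| := abs_sub (-x) (x^2/2)
        _ ≤ (5/4)*|x| := by
            rw [abs_neg, abs_of_nonneg (by positivity : (0:ℝ) ≤ x^2/2)]
            nlinarith
    have e1 : |(x - x^2/2)*(b - (-x - x^2/2))| ≤ (5/2)*x^4 := by
      rw [abs_mul]
      calc |x - x^2/2| * |b - (-x - x^2/2)| ≤ ((5/4)*|x|) * (2*|x|^3) :=
            mul_le_mul b1 hs (abs_nonneg _) (by positivity)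
        _ = (5/2)*|x|^4 := by ring
        _ = (5/2)*x^4 := by rw [hA4]
    have e2 : |(a - (x - x^2/2))*(-x - x^2/2)| ≤ (5/2)*x^4 := by
      rw [abs_mul]
      calc |a - (x - x^2/2)| * |(-x - x^2/2)| ≤ (2*|x|^3) * ((5/4)*|x|) :=
            mul_le_mul hr b2 (abs_nonneg _) (by positivity)
        _ = (5/2)*|x|^4 := by ring
        _ = (5/2)*x^4 := by rw [hA4]
    have e3 : |(a - (x - x^2/2))*(b - (-x - x^2/2))| ≤ x^4 := by
      rw [abs_mul]
      calc |a - (x - x^2/2)| * |b - (-x - x^2/2)| ≤ (2*|x|^3) * (2*|x|^3) :=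
            mul_le_mul hr hs (abs_nonneg _) (by positivity)
        _ = 4*(|x|^2)*(|x|^4) := by ring
        _ ≤ 1*x^4 := by rw [hA2, hA4]; nlinarith
        _ = x^4 := by ring
    rw [iden]
    refine le_trans (abs4 _ _ _ _) ?_
    have hx44 : |x^4/4| = x^4/4 := abs_of_nonneg (by positivity)
    linarith [e1, e2, e3]
  have habs : |a + b| ≤ (3/2)*x^2 := by
    calc |a + b| = |(a + b + x^2) - x^2| := by congr 1; ring
      _ ≤ |a + b + x^2| + |x^2| := abs_sub _ _
      _ ≤ 2*x^4 + x^2 := by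
          rw [abs_of_nonneg (sq_nonneg x)]; linarith
      _ ≤ (3/2)*x^2 := by nlinarith [sq_nonneg x]
  -- S2
  have hS2 : |a^2 + b^2 - 2*x^2| ≤ 20*x^4 := by
    have iden : a^2 + b^2 - 2*x^2 = (a+b)^2 - 2*(a*b + x^2) := by ring
    rw [iden]
    calc |(a+b)^2 - 2*(a*b + x^2)| ≤ |(a+b)^2| + |2*(a*b + x^2)| := abs_sub _ _
      _ ≤ 20*x^4 := by
          rw [abs_pow, abs_mul]
          have h1 : |a+b|^2 ≤ (9/4)*x^4 := by
            calc |a+b|^2 ≤ ((3/2)*x^2)^2 := pow_le_pow_left₀ (abs_nonneg _) habs 2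
              _ = (9/4)*x^4 := by ring
          have h2 : |(2:ℝ)| = 2 := by norm_num
          rw [h2]
          linarith [hab, hx40]
  -- S3
  have hS3 : |a^3 + b^3| ≤ 18*x^4 := by
    have iden : a^3 + b^3 = (a+b)*(a^2 - a*b + b^2) := by ring
    rw [iden, abs_mul]
    have hq : |a^2 - a*b + b^2| ≤ 12*x^2 := by
      calc |a^2 - a*b + b^2| ≤ |a^2 - a*b| + |b^2| := abs_add_le _ _
        _ ≤ |a^2| + |a*b| + |b^2| := by linarith [abs_sub (a^2) (a*b)]
        _ ≤ 12*x^2 := by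
            rw [abs_pow, abs_pow, abs_mul]
            have f1 : |a|^2 ≤ 4*x^2 := by
              calc |a|^2 ≤ (2*|x|)^2 := pow_le_pow_left₀ (abs_nonneg a) ha 2
                _ = 4*|x|^2 := by ring
                _ = 4*x^2 := by rw [hA2]
            have f2 : |b|^2 ≤ 4*x^2 := by
              calc |b|^2 ≤ (2*|x|)^2 := pow_le_pow_left₀ (abs_nonneg b) hb 2
                _ = 4*|x|^2 := by ring
                _ = 4*x^2 := by rw [hA2]
            have f3 : |a| * |b| ≤ 4*x^2 := by
              calc |a| * |b| ≤ (2*|x|)*(2*|x|) := mul_le_mul ha hb (abs_nonneg b) (by positivity)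
                _ = 4*|x|^2 := by ring
                _ = 4*x^2 := by rw [hA2]
            linarith
    calc |a+b| * |a^2 - a*b + b^2| ≤ ((3/2)*x^2) * (12*x^2) :=
          mul_le_mul habs hq (abs_nonneg _) (by positivity)
      _ = 18*x^4 := by ring
  -- exp bounds
  have hta : |t*a| ≤ 1 := by
    rw [abs_mul, abs_of_nonneg ht0]
    calc t * |a| ≤ 1 * (2*|x|) := mul_le_mul ht1 ha (abs_nonneg a) zero_le_one
      _ ≤ 1 := by linarith
  have htb : |t*b| ≤ 1 := by
    rw [abs_mul, abs_of_nonneg ht0]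
    calc t * |b| ≤ 1 * (2*|x|) := mul_le_mul ht1 hb (abs_nonneg b) zero_le_one
      _ ≤ 1 := by linarith
  have hEa : |Real.exp (t*a) - (1 + t*a + (t*a)^2/2 + (t*a)^3/6)| ≤ 16*x^4 := by
    refine (expE hta).trans ?_
    rw [abs_mul, abs_of_nonneg ht0]
    calc (t*|a|)^4 ≤ (1*(2*|x|))^4 := by
          apply pow_le_pow_left₀ (by positivity)
          exact mul_le_mul ht1 ha (abs_nonneg a) zero_le_one
      _ = 16*|x|^4 := by ring
      _ = 16*x^4 := by rw [hA4]
  have hEb : |Real.exp (t*b) - (1 + t*b + (t*b)^2/2 + (t*b)^3/6)| ≤ 16*x^4 := by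
    refine (expE htb).trans ?_
    rw [abs_mul, abs_of_nonneg ht0]
    calc (t*|b|)^4 ≤ (1*(2*|x|))^4 := by
          apply pow_le_pow_left₀ (by positivity)
          exact mul_le_mul ht1 hb (abs_nonneg b) zero_le_one
      _ = 16*|x|^4 := by ring
      _ = 16*x^4 := by rw [hA4]
  -- t-weighted bounds
  have hT1 : |t*(a + b + x^2)| ≤ 2*x^4 := by
    rw [abs_mul, abs_of_nonneg ht0]
    calc t * |a + b + x^2| ≤ 1 * (2*x^4) := mul_le_mul ht1 hS1 (abs_nonneg _) zero_le_one
      _ = 2*x^4 := by ring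
  have hT2 : |t^2/2*(a^2 + b^2 - 2*x^2)| ≤ 10*x^4 := by
    rw [abs_mul, abs_of_nonneg (by positivity : (0:ℝ) ≤ t^2/2)]
    have ht2 : t^2/2 ≤ 1/2 := by have := pow_le_one₀ ht0 ht1 (n := 2); linarith
    calc t^2/2 * |a^2 + b^2 - 2*x^2| ≤ (1/2) * (20*x^4) :=
          mul_le_mul ht2 hS2 (abs_nonneg _) (by norm_num)
      _ = 10*x^4 := by ring
  have hT3 : |t^3/6*(a^3 + b^3)| ≤ 3*x^4 := by
    rw [abs_mul, abs_of_nonneg (by positivity : (0:ℝ) ≤ t^3/6)]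
    have ht3 : t^3/6 ≤ 1/6 := by have := pow_le_one₀ ht0 ht1 (n := 3); linarith
    calc t^3/6 * |a^3 + b^3| ≤ (1/6) * (18*x^4) :=
          mul_le_mul ht3 hS3 (abs_nonneg _) (by norm_num)
      _ = 3*x^4 := by ring
  have iden : 2 - (Real.exp (t*a) + Real.exp (t*b)) - (t - t^2)*x^2
      = -(Real.exp (t*a) - (1 + t*a + (t*a)^2/2 + (t*a)^3/6))
        - (Real.exp (t*b) - (1 + t*b + (t*b)^2/2 + (t*b)^3/6))
        - t*(a + b + x^2) - (t^2/2)*(a^2 + b^2 - 2*x^2) - (t^3/6)*(a^3 + b^3) := by ring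
  rw [iden]
  refine le_trans (abs5 _ _ _ _ _) ?_
  linarith [hEa, hEb, hT1, hT2, hT3]


lemma key {x t : ℝ} (hx : |x| ≤ 1/2) (ht0 : 0 ≤ t) (ht1 : t ≤ 1) :
    |2 - ((1+x) ^ t + (1-x) ^ t) - (t - t^2) * x^2| ≤ 50 * x^4 := by
  obtain ⟨hxl, hxr⟩ := abs_le.mp hx
  have h1p : (0:ℝ) < 1 + x := by linarith
  have h1m : (0:ℝ) < 1 - x := by linarith
  have hnx : |(-x)| ≤ 1/2 := by rwa [abs_neg]
  have hfix : (1:ℝ) - -x = 1 + x := by ring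
  have ha : |Real.log (1+x)| ≤ 2*|x| := by
    have h := log1 hnx
    rw [abs_neg, hfix] at h; exact h
  have hb : |Real.log (1-x)| ≤ 2*|x| := log1 hx
  have hr : |Real.log (1+x) - (x - x^2/2)| ≤ 2*|x|^3 := by
    have h := log3 hnx
    rw [abs_neg, hfix] at h
    rw [show Real.log (1+x) + -x + (-x)^2/2 = Real.log (1+x) - (x - x^2/2) by ring] at h
    exact h
  have hs : |Real.log (1-x) - (-x - x^2/2)| ≤ 2*|x|^3 := by
    have h := log3 hx
    rw [show Real.log (1-x) + x + x^2/2 = Real.log (1-x) - (-x - x^2/2) by ring] at h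
    exact h
  have hS1 : |Real.log (1+x) + Real.log (1-x) + x^2| ≤ 2*x^4 := by
    have habl : Real.log (1+x) + Real.log (1-x) = Real.log (1 - x^2) := by
      rw [← Real.log_mul h1p.ne' h1m.ne']
      congr 1; ring
    rw [habl]
    have hx2 : |x^2| ≤ 1/2 := by
      rw [abs_of_nonneg (sq_nonneg x)]; nlinarith
    calc |Real.log (1 - x^2) + x^2| ≤ 2*(x^2)^2 := log2 hx2
      _ = 2*x^4 := by ring
  have hrw1 : (1+x) ^ t = Real.exp (t * Real.log (1+x)) := by
    rw [Real.rpow_def_of_pos h1p, mul_comm]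
  have hrw2 : (1-x) ^ t = Real.exp (t * Real.log (1-x)) := by
    rw [Real.rpow_def_of_pos h1m, mul_comm]
  rw [hrw1, hrw2]
  exact core hx ht0 ht1 ha hb hr hs hS1

lemma main_bound (c : ℝ) (hc : 0 < c) {lam : ℝ} (hl : |lam| ≤ c/2) :
    |sSup ((fun t : ℝ =>
          (1 / 4) * (2 * c - c ^ (1 - t) * ((c + lam) ^ t + (c - lam) ^ t))) ''
            Set.Icc 0 1) - lam ^ 2 / (16 * c)| ≤ (13 / c^3) * lam^4 := by
  set x : ℝ := lam / c with hxdef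
  have hx : |x| ≤ 1/2 := by
    rw [hxdef, abs_div, abs_of_pos hc, div_le_iff₀ hc]
    linarith
  obtain ⟨hxl, hxr⟩ := abs_le.mp hx
  have h1p : (0:ℝ) < 1 + x := by linarith
  have h1m : (0:ℝ) < 1 - x := by linarith
  have hcl : c + lam = c * (1+x) := by rw [hxdef]; field_simp
  have hcm : c - lam = c * (1-x) := by rw [hxdef]; field_simp
  have hfe : ∀ t : ℝ, (1/4) * (2*c - c^(1-t) * ((c+lam)^t + (c-lam)^t))
      = (c/4) * (2 - ((1+x)^t + (1-x)^t)) := by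
    intro t
    rw [hcl, hcm, Real.mul_rpow hc.le h1p.le, Real.mul_rpow hc.le h1m.le]
    rw [show c ^ (1-t) * (c ^ t * (1+x)^t + c ^ t * (1-x)^t)
        = (c^(1-t) * c^t) * ((1+x)^t + (1-x)^t) by ring]
    rw [← Real.rpow_add hc, show (1-t)+t = (1:ℝ) by ring, Real.rpow_one]
    ring
  have hlam2 : lam^2/(16*c) = (c/4) * (x^2/4) := by
    rw [hxdef]; field_simp; ring
  have hlam4 : (c/4) * (50 * x^4) = (25/(2*c^3)) * lam^4 := by
    rw [hxdef]; field_simp; ring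
  -- upper bound for every element
  have hub : ∀ y ∈ ((fun t : ℝ =>
        (1 / 4) * (2 * c - c ^ (1 - t) * ((c + lam) ^ t + (c - lam) ^ t))) '' Set.Icc 0 1),
      y ≤ lam^2/(16*c) + (25/(2*c^3)) * lam^4 := by
    rintro y ⟨t, ⟨ht0, ht1⟩, rfl⟩
    show (1/4) * (2*c - c^(1-t) * ((c+lam)^t + (c-lam)^t)) ≤ _
    rw [hfe t]
    have hk := (abs_le.mp (key hx ht0 ht1)).2
    have htt : (t - t^2) * x^2 ≤ x^2/4 := by nlinarith [sq_nonneg (t - 1/2), sq_nonneg x]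
    have h2 : 2 - ((1+x)^t + (1-x)^t) ≤ x^2/4 + 50*x^4 := by linarith
    calc (c/4) * (2 - ((1+x)^t + (1-x)^t)) ≤ (c/4) * (x^2/4 + 50*x^4) := by
          apply mul_le_mul_of_nonneg_left h2 (by positivity)
      _ = (c/4)*(x^2/4) + (c/4)*(50*x^4) := by ring
      _ = lam^2/(16*c) + (25/(2*c^3)) * lam^4 := by rw [hlam2, hlam4]
  have hne : ((fun t : ℝ =>
        (1 / 4) * (2 * c - c ^ (1 - t) * ((c + lam) ^ t + (c - lam) ^ t))) ''
          Set.Icc 0 1).Nonempty :=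
    Set.Nonempty.image _ (Set.nonempty_Icc.mpr (by norm_num))
  have hsup_le := csSup_le hne hub
  -- lower bound: element at t = 1/2
  have hmem : (fun t : ℝ =>
        (1 / 4) * (2 * c - c ^ (1 - t) * ((c + lam) ^ t + (c - lam) ^ t))) (1/2)
      ∈ ((fun t : ℝ =>
        (1 / 4) * (2 * c - c ^ (1 - t) * ((c + lam) ^ t + (c - lam) ^ t))) '' Set.Icc 0 1) :=
    Set.mem_image_of_mem _ (by constructor <;> norm_num)
  have hbdd : BddAbove ((fun t : ℝ =>
        (1 / 4) * (2 * c - c ^ (1 - t) * ((c + lam) ^ t + (c - lam) ^ t))) '' Set.Icc 0 1) :=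
    ⟨lam^2/(16*c) + (25/(2*c^3)) * lam^4, fun y hy => hub y hy⟩
  have hle_sup := le_csSup hbdd hmem
  have hval : (fun t : ℝ =>
        (1 / 4) * (2 * c - c ^ (1 - t) * ((c + lam) ^ t + (c - lam) ^ t))) (1/2)
      ≥ lam^2/(16*c) - (25/(2*c^3)) * lam^4 := by
    show lam^2/(16*c) - (25/(2*c^3)) * lam^4 ≤
      (1/4) * (2*c - c^(1-(1/2:ℝ)) * ((c+lam)^((1:ℝ)/2) + (c-lam)^((1:ℝ)/2)))
    rw [hfe (1/2)]
    have hk := (abs_le.mp (key hx (by norm_num : (0:ℝ) ≤ 1/2) (by norm_num))).1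
    have htt : ((1:ℝ)/2 - (1/2)^2) * x^2 = x^2/4 := by ring
    have h2 : 2 - ((1+x)^((1:ℝ)/2) + (1-x)^((1:ℝ)/2)) ≥ x^2/4 - 50*x^4 := by
      rw [htt] at hk; linarith
    calc (c/4) * (2 - ((1+x)^((1:ℝ)/2) + (1-x)^((1:ℝ)/2)))
        ≥ (c/4) * (x^2/4 - 50*x^4) := by
          apply mul_le_mul_of_nonneg_left h2 (by positivity)
      _ = (c/4)*(x^2/4) - (c/4)*(50*x^4) := by ring
      _ = lam^2/(16*c) - (25/(2*c^3)) * lam^4 := by rw [hlam2, hlam4]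
  have hlam40 : (0:ℝ) ≤ lam^4 := by positivity
  have hc3 : (0:ℝ) < c^3 := by positivity
  rw [abs_le]
  constructor
  · have : (25/(2*c^3)) * lam^4 ≤ (13/c^3) * lam^4 := by
      apply mul_le_mul_of_nonneg_right _ hlam40
      rw [div_le_div_iff₀ (by positivity) hc3]
      nlinarith
    linarith [le_trans hval hle_sup]
  · have : (25/(2*c^3)) * lam^4 ≤ (13/c^3) * lam^4 := by
      apply mul_le_mul_of_nonneg_right _ hlam40
      rw [div_le_div_iff₀ (by positivity) hc3]
      nlinarith
    linarith [hsup_le]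

/-- Small-signal expansion of the per-vertex Chernoff information index:
`J(λ) = λ²/(16c) + O(λ⁴)` as `λ → 0`, where
`J(λ) = sup_{t ∈ [0,1]} (1/4)(2c − c^(1−t)((c+λ)^t + (c−λ)^t))` (real powers). -/
theorem chernoff_index_small_signal (c : ℝ) (hc : 0 < c) :
    (fun lam : ℝ =>
        sSup ((fun t : ℝ =>
          (1 / 4) * (2 * c - c ^ (1 - t) * ((c + lam) ^ t + (c - lam) ^ t))) ''
            Set.Icc 0 1) - lam ^ 2 / (16 * c))
      =O[nhds 0] (fun lam : ℝ => lam ^ 4) := by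
  rw [isBigO_iff]
  refine ⟨13 / c^3, ?_⟩
  have hmem : Set.Icc (-(c/2)) (c/2) ∈ nhds (0:ℝ) :=
    Icc_mem_nhds (by linarith) (by linarith)
  filter_upwards [hmem] with lam hlam
  have hl : |lam| ≤ c/2 := abs_le.mpr ⟨hlam.1, hlam.2⟩
  rw [Real.norm_eq_abs, Real.norm_eq_abs, abs_of_nonneg (by positivity : (0:ℝ) ≤ lam^4)]
  exact main_bound c hc hl
end

section
/- Fix c > 0. Define, for |λ| < c, I(λ) := (1/4)·[(c+λ)·log((c+λ)/c) + (c−λ)·log((c−λ)/c)] and J(λ) := sup over t ∈ [0,1] of (1/4)·[2c − c^{1−t}·((c+λ)^t + (c−λ)^t)] (real powers). Then the function λ ↦ J(λ) − I(λ)/4 is O(λ⁴) as λ → 0 (Filter.IsBigO at 𝓝 0 with respect to λ ↦ λ⁴): the Chernoff exponent is asymptotically one quarter of the KL exponent. -/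
open Filter Real Asymptotics

lemma exp_add_exp_neg_ge (s : ℝ) : 2 + s^2 ≤ Real.exp s + Real.exp (-s) := by
  have key : ∀ u : ℝ, 0 ≤ u → 2 + u^2 ≤ Real.exp u + Real.exp (-u) := by
    intro u hu
    have h1 : u/2 ≤ Real.sinh (u/2) := Real.self_le_sinh_iff.2 (by linarith)
    rw [Real.sinh_eq] at h1
    have h3 : Real.exp (u/2) * Real.exp (-(u/2)) = 1 := by
      rw [← Real.exp_add]; simp
    have h4 : Real.exp (u/2) * Real.exp (u/2) = Real.exp u := by
      rw [← Real.exp_add]; ring_nf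
    have h5 : Real.exp (-(u/2)) * Real.exp (-(u/2)) = Real.exp (-u) := by
      rw [← Real.exp_add]; ring_nf
    nlinarith [Real.exp_pos (u/2), Real.exp_pos (-(u/2)),
      sq_nonneg (Real.exp (u/2) - Real.exp (-(u/2)) - u)]
  rcases le_total 0 s with h | h
  · exact key s h
  · have := key (-s) (by linarith)
    rw [neg_neg] at this
    nlinarith [this]

lemma log_taylor_bound {x : ℝ} (hx : |x| ≤ 1/12) :
    |Real.log (1 - x) - (-x - x^2/2 - x^3/3)| ≤ 2*x^4 := by
  have hx1 : |x| < 1 := by linarith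
  have h := Real.abs_log_sub_add_sum_range_le hx1 3
  have hsum : (∑ i ∈ Finset.range 3, x ^ (i + 1) / (i + 1)) = x + x^2/2 + x^3/3 := by
    simp [Finset.sum_range_succ]; ring
  rw [hsum] at h
  have h2 : |x|^(3+1)/(1 - |x|) ≤ 2*x^4 := by
    have hp : |x|^(3+1) = x^4 := by
      have h04 : (0:ℝ) ≤ x^4 := by positivity
      rw [show (3+1) = 4 from rfl, pow_abs, abs_of_nonneg h04]
    rw [hp]
    have h11 : (11:ℝ)/12 ≤ 1 - |x| := by linarith
    have := div_le_div_of_nonneg_left (by positivity : (0:ℝ) ≤ x^4)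
      (by norm_num : (0:ℝ) < 11/12) h11
    calc x^4/(1-|x|) ≤ x^4/(11/12) := this
      _ ≤ 2*x^4 := by nlinarith [pow_le_pow_left₀ (abs_nonneg x) (le_of_lt hx1) 4]
  calc |Real.log (1 - x) - (-x - x^2/2 - x^3/3)|
      = |(x + x^2/2 + x^3/3) + Real.log (1-x)| := by ring_nf
    _ ≤ |x|^(3+1)/(1 - |x|) := h
    _ ≤ 2*x^4 := h2

lemma d_bounds_nonneg {x d : ℝ} (hxs : 0 ≤ x) (hxu : x ≤ 1/12)
    (hd1 : x + x^3/3 - 2*x^4 ≤ d) (hd2 : d ≤ x + x^3/3 + 2*x^4) :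
    x^2 ≤ d^2 ∧ d^2 ≤ 2*x^2 := by
  have hx3 : (0:ℝ) ≤ x^3 := pow_nonneg hxs 3
  have h34 : x^4 ≤ x^3/12 := by
    calc x^4 = x^3*x := by ring
      _ ≤ x^3*(1/12) := mul_le_mul_of_nonneg_left hxu hx3
      _ = x^3/12 := by ring
  have hxd : x ≤ d := by linarith
  have h0d : 0 ≤ d := hxs.trans hxd
  have hx2 : x^2 ≤ x/12 := by
    calc x^2 = x*x := by ring
      _ ≤ x*(1/12) := mul_le_mul_of_nonneg_left hxu hxs
      _ = x/12 := by ring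
  have h3 : x^3 ≤ x/144 := by
    calc x^3 = x*x^2 := by ring
      _ ≤ x*(x/12) := mul_le_mul_of_nonneg_left hx2 hxs
      _ = x^2/12 := by ring
      _ ≤ (x/12)/12 := by linarith
      _ = x/144 := by ring
  have h4 : x^4 ≤ x/1728 := by
    calc x^4 = x*x^3 := by ring
      _ ≤ x*(x/144) := mul_le_mul_of_nonneg_left h3 hxs
      _ = x^2/144 := by ring
      _ ≤ (x/12)/144 := by linarith
      _ = x/1728 := by ring
  have hdu : d ≤ (5/4)*x := by linarith
  constructor
  · have := mul_le_mul hxd hxd hxs h0d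
    nlinarith [this]
  · have := mul_le_mul hdu hdu h0d (by linarith : (0:ℝ) ≤ (5/4)*x)
    nlinarith [this, sq_nonneg x]

lemma le_of_sq_le_sq'' {u v : ℝ} (hu : 0 < u) (hv : 0 < v) (h : u^2 ≤ v^2) : u ≤ v := by
  nlinarith

set_option maxHeartbeats 1000000 in
/-- The Chernoff exponent is asymptotically one quarter of the KL exponent:
`J(λ) − I(λ)/4 = O(λ⁴)` as `λ → 0`. -/
theorem chernoff_quarter_kl (c : ℝ) (hc : 0 < c) :
    (fun lam : ℝ =>
        sSup ((fun t : ℝ =>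
          (1 / 4) * (2 * c - c ^ (1 - t) * ((c + lam) ^ t + (c - lam) ^ t))) ''
            Set.Icc 0 1) -
        ((1 / 4) * ((c + lam) * Real.log ((c + lam) / c) +
          (c - lam) * Real.log ((c - lam) / c))) / 4)
      =O[nhds 0] (fun lam : ℝ => lam ^ 4) := by
  rw [isBigO_iff]
  refine ⟨2/c^3, ?_⟩
  have hball : ∀ᶠ lam : ℝ in nhds 0, |lam| ≤ c/12 := by
    filter_upwards [Metric.ball_mem_nhds (0:ℝ) (show (0:ℝ) < c/12 by positivity)] with y hy
    rw [Metric.mem_ball, Real.dist_eq, sub_zero] at hy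
    linarith
  filter_upwards [hball] with lam hlam
  have hcne : c ≠ 0 := ne_of_gt hc
  set x : ℝ := lam / c with hxdef
  have hlamx : lam = c * x := by rw [hxdef]; field_simp
  have hx : |x| ≤ 1/12 := by
    rw [hxdef, abs_div, abs_of_pos hc, div_le_iff₀ hc]
    linarith
  have hxu : x ≤ 1/12 := (abs_le.1 hx).2
  have hxl : -(1/12) ≤ x := (abs_le.1 hx).1
  have hx2 : x^2 ≤ 1/144 := by nlinarith
  have hx4nn : (0:ℝ) ≤ x^4 := by positivity
  have hp4 : x^4 ≤ x^2/144 := by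
    calc x^4 = x^2*x^2 := by ring
      _ ≤ x^2*(1/144) := mul_le_mul_of_nonneg_left hx2 (sq_nonneg x)
      _ = x^2/144 := by ring
  have hp6 : x^6 ≤ x^4/144 := by
    calc x^6 = x^4*x^2 := by ring
      _ ≤ x^4*(1/144) := mul_le_mul_of_nonneg_left hx2 hx4nn
      _ = x^4/144 := by ring
  have hp8 : x^8 ≤ x^6/144 := by
    calc x^8 = x^6*x^2 := by ring
      _ ≤ x^6*(1/144) := mul_le_mul_of_nonneg_left hx2 (by positivity)
      _ = x^6/144 := by ring
  have hx6nn : (0:ℝ) ≤ x^6 := by positivity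
  have h1px : (0:ℝ) < 1 + x := by linarith
  have h1mx : (0:ℝ) < 1 - x := by linarith
  have hclam : 0 < c + lam := by
    have := (abs_le.1 hlam).1; linarith
  have hcmlam : 0 < c - lam := by
    have := (abs_le.1 hlam).2; linarith
  have hcx : c + lam = c * (1+x) := by rw [hlamx]; ring
  have hcmx : c - lam = c * (1-x) := by rw [hlamx]; ring
  set A : ℝ := Real.log (1+x) with hAdef
  set B : ℝ := Real.log (1-x) with hBdef
  have hBt := log_taylor_bound hx
  have hAt : |A - (x - x^2/2 + x^3/3)| ≤ 2*x^4 := by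
    have h := log_taylor_bound (x := -x) (by rwa [abs_neg])
    have e : (1:ℝ) - -x = 1 + x := by ring
    rw [e] at h
    have e2 : -(-x) - (-x)^2/2 - (-x)^3/3 = x - x^2/2 + x^3/3 := by ring
    rw [e2] at h
    have e3 : 2*(-x)^4 = 2*x^4 := by ring
    rw [e3] at h
    exact h
  obtain ⟨hA1, hA2⟩ := abs_le.1 hAt
  obtain ⟨hB1, hB2⟩ := abs_le.1 hBt
  have hA1' : x - x^2/2 + x^3/3 - 2*x^4 ≤ A := by linarith only [hA1]
  have hA2' : A ≤ x - x^2/2 + x^3/3 + 2*x^4 := by linarith only [hA2]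
  have hB1' : -x - x^2/2 - x^3/3 - 2*x^4 ≤ B := by linarith only [hB1]
  have hB2' : B ≤ -x - x^2/2 - x^3/3 + 2*x^4 := by linarith only [hB2]
  set g : ℝ := (A+B)/2 with hgdef
  set d : ℝ := (A-B)/2 with hddef
  have hAg : A = g + d := by rw [hgdef, hddef]; ring
  have hBg : B = g - d := by rw [hgdef, hddef]; ring
  have hg1 : -(x^2/2) - 2*x^4 ≤ g := by rw [hgdef]; linarith only [hA1', hB1']
  have hg2 : g ≤ -(x^2/2) + 2*x^4 := by rw [hgdef]; linarith only [hA2', hB2']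
  have hgle0 : g ≤ 0 := by linarith only [hg2, hp4, sq_nonneg x]
  have hd1 : x + x^3/3 - 2*x^4 ≤ d := by rw [hddef]; linarith only [hA1', hB2']
  have hd2 : d ≤ x + x^3/3 + 2*x^4 := by rw [hddef]; linarith only [hA2', hB1']
  have hdboth : x^2 ≤ d^2 ∧ d^2 ≤ 2*x^2 := by
    rcases le_total 0 x with hxs | hxs
    · exact d_bounds_nonneg hxs hxu hd1 hd2
    · have h1 : (-x) + (-x)^3/3 - 2*(-x)^4 ≤ -d := by linarith only [hd2]
      have h2 : -d ≤ (-x) + (-x)^3/3 + 2*(-x)^4 := by linarith only [hd1]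
      have h := d_bounds_nonneg (neg_nonneg.2 hxs) (by linarith only [hxl]) h1 h2
      constructor
      · linarith only [h.1]
      · linarith only [h.2]
  obtain ⟨hdlow, hdup⟩ := hdboth
  -- key quadratic inequality
  have hga : g^2 ≤ (x^2/2 + 2*x^4)^2 := sq_le_sq' (by linarith) (by linarith)
  have hgd : g^2 ≤ (x^2/4 + 3*x^4) * d^2 := by
    have h8 : 4*x^8 ≤ x^6 := by linarith [hp8, hx6nn]
    have e1 : (x^2/2 + 2*x^4)^2 = x^4/4 + 2*x^6 + 4*x^8 := by ring
    have e2 : (x^2/4 + 3*x^4) * x^2 = x^4/4 + 3*x^6 := by ring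
    have h3 : (x^2/4 + 3*x^4) * x^2 ≤ (x^2/4 + 3*x^4) * d^2 :=
      mul_le_mul_of_nonneg_left hdlow (by positivity)
    linarith only [hga, h8, h3, e1, e2]
  -- rewriting the rpow expression
  have hrw : ∀ t : ℝ, c ^ (1-t) * ((c+lam) ^ t + (c-lam) ^ t)
      = c * (Real.exp (t*A) + Real.exp (t*B)) := by
    intro t
    have hA' : Real.log (c + lam) = Real.log c + A := by
      rw [hcx, Real.log_mul hcne (ne_of_gt h1px), hAdef]
    have hB' : Real.log (c - lam) = Real.log c + B := by
      rw [hcmx, Real.log_mul hcne (ne_of_gt h1mx), hBdef]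
    rw [Real.rpow_def_of_pos hc, Real.rpow_def_of_pos hclam, Real.rpow_def_of_pos hcmlam,
      hA', hB', mul_add, ← Real.exp_add, ← Real.exp_add]
    have e1 : Real.log c * (1 - t) + (Real.log c + A) * t = Real.log c + t*A := by ring
    have e2 : Real.log c * (1 - t) + (Real.log c + B) * t = Real.log c + t*B := by ring
    rw [e1, e2, Real.exp_add, Real.exp_add, Real.exp_log hc, mul_add]
  -- pointwise upper bound on the sup candidates
  have hpt : ∀ t ∈ Set.Icc (0:ℝ) 1,
      (1:ℝ)/4 * (2*c - c ^ (1-t) * ((c+lam) ^ t + (c-lam) ^ t))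
        ≤ c/16*x^2 + 5*c/4*x^4 := by
    rintro t ⟨ht0, ht1⟩
    rw [hrw t]
    have hq : -(x^2/4 + 3*x^4) ≤ 2*t*g + t^2*d^2 := by
      have hid : (2*t*g + t^2*d^2) * d^2 + g^2 = (t*d^2 + g)^2 := by ring
      have hs := sq_nonneg (t*d^2 + g)
      have hLd : -(g^2) ≤ (2*t*g + t^2*d^2) * d^2 := by linarith only [hid, hs]
      rcases (sq_nonneg d).lt_or_eq with hd0 | hd0
      · by_contra hcon
        push_neg at hcon
        have hneg : 2*t*g + t^2*d^2 + (x^2/4 + 3*x^4) < 0 := by linarith only [hcon]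
        have hm := mul_neg_of_neg_of_pos hneg hd0
        have hexp : (2*t*g + t^2*d^2 + (x^2/4 + 3*x^4)) * d^2
            = (2*t*g + t^2*d^2) * d^2 + (x^2/4 + 3*x^4) * d^2 := by ring
        linarith only [hm, hexp, hLd, hgd]
      · have hgz : g^2 ≤ 0 := by
          have e0 : (x^2/4 + 3*x^4) * d^2 = 0 := by rw [← hd0]; ring
          linarith only [hgd, e0]
        have hgsq : g^2 = 0 := le_antisymm hgz (sq_nonneg g)
        have hg0 : g = 0 := by
          exact (pow_eq_zero_iff (by norm_num : (2:ℕ) ≠ 0)).mp hgsq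
        have hpos : (0:ℝ) ≤ x^2/4 + 3*x^4 := by positivity
        rw [hg0, ← hd0]
        linarith only [hpos]
    have h1tg : 0 ≤ 1 + t*g := by
      have hprod := mul_nonneg (sub_nonneg.2 ht1) (neg_nonneg.2 hgle0)
      have hg3 : -(1/2:ℝ) ≤ g := by linarith only [hg1, hx2, hp4]
      linarith only [hprod, hg3]
    have hexp1 : 1 + t*g ≤ Real.exp (t*g) := by linarith only [Real.add_one_le_exp (t*g)]
    have hexp2 : 2 + (t*d)^2 ≤ Real.exp (t*d) + Real.exp (-(t*d)) := exp_add_exp_neg_ge (t*d)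
    have hmul : (1 + t*g) * (2 + (t*d)^2)
        ≤ Real.exp (t*g) * (Real.exp (t*d) + Real.exp (-(t*d))) :=
      mul_le_mul hexp1 hexp2 (by positivity) (le_of_lt (Real.exp_pos _))
    have hsplit : Real.exp (t*A) + Real.exp (t*B)
        = Real.exp (t*g) * (Real.exp (t*d) + Real.exp (-(t*d))) := by
      have e1 : t*A = t*g + t*d := by rw [hAg]; ring
      have e2 : t*B = t*g + -(t*d) := by rw [hBg]; ring
      rw [e1, e2, Real.exp_add, Real.exp_add, ← mul_add]
    have hgd2 : -(2*x^4) ≤ g * d^2 := by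
      have h1 : (-(x^2/2) - 2*x^4) * d^2 ≤ g * d^2 :=
        mul_le_mul_of_nonneg_right hg1 (sq_nonneg d)
      have h2 : (-(x^2/2) - 2*x^4) * (2*x^2) ≤ (-(x^2/2) - 2*x^4) * d^2 := by
        apply mul_le_mul_of_nonpos_left hdup
        have : (0:ℝ) ≤ x^2/2 + 2*x^4 := by positivity
        linarith
      have e : (-(x^2/2) - 2*x^4) * (2*x^2) = -(x^4) - 4*x^6 := by ring
      linarith only [h1, h2, e, hp6, hx4nn]
    have ht3 : t^3 ≤ 1 := by
      have h1 : t*t ≤ t*1 := mul_le_mul_of_nonneg_left ht1 ht0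
      have h2 : t^2 ≤ 1 := by linarith only [h1, ht1]
      have h3 : t*t^2 ≤ t*1 := mul_le_mul_of_nonneg_left h2 ht0
      linarith only [h3, h1, ht1]
    have htcube : g * d^2 ≤ t^3 * (g * d^2) := by
      have hprod := mul_nonneg (mul_nonneg (sub_nonneg.2 ht3) (neg_nonneg.2 hgle0)) (sq_nonneg d)
      linarith only [hprod]
    have hh : 2 - x^2/4 - 5*x^4 ≤ Real.exp (t*A) + Real.exp (t*B) := by
      have expand : (1 + t*g) * (2 + (t*d)^2) = 2 + (2*t*g + t^2*d^2) + t^3*(g*d^2) := by ring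
      have hlow : 2 - x^2/4 - 5*x^4 ≤ (1 + t*g) * (2 + (t*d)^2) := by
        rw [expand]; linarith only [hq, htcube, hgd2]
      rw [hsplit]; linarith only [hmul, hlow]
    have hfin := mul_le_mul_of_nonneg_left hh (le_of_lt hc)
    linarith only [hfin]
  -- bounds on the supremum
  have hSne : ((fun t : ℝ =>
      (1:ℝ)/4 * (2*c - c ^ (1-t) * ((c+lam) ^ t + (c-lam) ^ t))) '' Set.Icc (0:ℝ) 1).Nonempty :=
    ⟨_, Set.mem_image_of_mem _ (Set.left_mem_Icc.2 zero_le_one)⟩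
  have hubm : ∀ y ∈ ((fun t : ℝ =>
      (1:ℝ)/4 * (2*c - c ^ (1-t) * ((c+lam) ^ t + (c-lam) ^ t))) '' Set.Icc (0:ℝ) 1),
      y ≤ c/16*x^2 + 5*c/4*x^4 := by
    rintro y ⟨t, ht, rfl⟩
    exact hpt t ht
  have hJub : sSup ((fun t : ℝ =>
      (1:ℝ)/4 * (2*c - c ^ (1-t) * ((c+lam) ^ t + (c-lam) ^ t))) '' Set.Icc (0:ℝ) 1)
      ≤ c/16*x^2 + 5*c/4*x^4 := csSup_le hSne hubm
  have hbdd : BddAbove ((fun t : ℝ =>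
      (1:ℝ)/4 * (2*c - c ^ (1-t) * ((c+lam) ^ t + (c-lam) ^ t))) '' Set.Icc (0:ℝ) 1) :=
    ⟨c/16*x^2 + 5*c/4*x^4, hubm⟩
  have hhalf : c/16*x^2 ≤
      (1:ℝ)/4 * (2*c - c ^ (1-(1/2:ℝ)) * ((c+lam) ^ (1/2:ℝ) + (c-lam) ^ (1/2:ℝ))) := by
    rw [hrw (1/2)]
    set sa : ℝ := Real.exp ((1/2)*A) with hsadef
    set sb : ℝ := Real.exp ((1/2)*B) with hsbdef
    have hsa : 0 < sa := Real.exp_pos _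
    have hsb : 0 < sb := Real.exp_pos _
    have ha2 : sa^2 = 1 + x := by
      rw [hsadef, sq, ← Real.exp_add]
      have e : (1/2)*A + (1/2)*A = A := by ring
      rw [e, hAdef, Real.exp_log h1px]
    have hb2 : sb^2 = 1 - x := by
      rw [hsbdef, sq, ← Real.exp_add]
      have e : (1/2)*B + (1/2)*B = B := by ring
      rw [e, hBdef, Real.exp_log h1mx]
    have hab2 : (sa*sb)^2 = 1 - x^2 := by rw [mul_pow, ha2, hb2]; ring
    have hab : sa * sb ≤ 1 - x^2/2 := by
      refine le_of_sq_le_sq'' (mul_pos hsa hsb) (by linarith only [hx2]) ?_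
      have e : (1 - x^2/2)^2 = 1 - x^2 + x^4/4 := by ring
      linarith only [hab2, e, hx4nn]
    have hsum2 : (sa+sb)^2 ≤ 4 - x^2 := by linarith only [ha2, hb2, hab]
    have hsum : sa + sb ≤ 2 - x^2/4 := by
      refine le_of_sq_le_sq'' (add_pos hsa hsb) (by linarith only [hx2]) ?_
      have e : (2 - x^2/4)^2 = 4 - x^2 + x^4/16 := by ring
      linarith only [hsum2, e, hx4nn]
    have hfin := mul_le_mul_of_nonneg_left hsum (le_of_lt hc)
    linarith only [hfin]
  have hmem : (1:ℝ)/4 * (2*c - c ^ (1-(1/2:ℝ)) * ((c+lam) ^ (1/2:ℝ) + (c-lam) ^ (1/2:ℝ)))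
      ∈ ((fun t : ℝ =>
      (1:ℝ)/4 * (2*c - c ^ (1-t) * ((c+lam) ^ t + (c-lam) ^ t))) '' Set.Icc (0:ℝ) 1) :=
    Set.mem_image_of_mem _ (by norm_num : (1/2:ℝ) ∈ Set.Icc (0:ℝ) 1)
  have hJlb : c/16*x^2 ≤ sSup ((fun t : ℝ =>
      (1:ℝ)/4 * (2*c - c ^ (1-t) * ((c+lam) ^ t + (c-lam) ^ t))) '' Set.Icc (0:ℝ) 1) :=
    hhalf.trans (le_csSup hbdd hmem)
  -- the KL side
  have hI1 : Real.log ((c+lam)/c) = A := by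
    rw [hcx, mul_div_cancel_left₀ _ hcne, hAdef]
  have hI2 : Real.log ((c-lam)/c) = B := by
    rw [hcmx, mul_div_cancel_left₀ _ hcne, hBdef]
  have hmA := mul_le_mul_of_nonneg_left hA2' (le_of_lt h1px)
  have hmB := mul_le_mul_of_nonneg_left hB2' (le_of_lt h1mx)
  have hmA' := mul_le_mul_of_nonneg_left hA1' (le_of_lt h1px)
  have hmB' := mul_le_mul_of_nonneg_left hB1' (le_of_lt h1mx)
  have hphiu : (1+x)*A + (1-x)*B ≤ x^2 + 6*x^4 := by linarith only [hmA, hmB, hx4nn]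
  have hphil : x^2 - 6*x^4 ≤ (1+x)*A + (1-x)*B := by linarith only [hmA', hmB', hx4nn]
  -- assemble
  have hIeq : 1/4 * ((c+lam) * A + (c-lam) * B) / 4
      = 1/4 * (c*(1+x) * A + c*(1-x) * B) / 4 := by rw [← hcx, ← hcmx]
  rw [Real.norm_eq_abs, Real.norm_eq_abs, hI1, hI2, hIeq]
  have habs4 : |lam^4| = lam^4 := abs_of_nonneg (by positivity)
  rw [habs4]
  have hIlb : c/16*(x^2 - 6*x^4) ≤ 1/4 * (c*(1+x) * A + c*(1-x) * B) / 4 := by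
    have h := mul_le_mul_of_nonneg_left hphil (by positivity : (0:ℝ) ≤ c/16)
    linarith only [h]
  have hIub : 1/4 * (c*(1+x) * A + c*(1-x) * B) / 4 ≤ c/16*(x^2 + 6*x^4) := by
    have h := mul_le_mul_of_nonneg_left hphiu (by positivity : (0:ℝ) ≤ c/16)
    linarith only [h]
  have hrhs : 2/c^3 * lam^4 = 2*c*x^4 := by
    rw [hlamx]; field_simp
  rw [hrhs, abs_le]
  have hcx4 : (0:ℝ) ≤ c*x^4 := by positivity
  constructor
  · linarith only [hJlb, hIub, hcx4]
  · linarith only [hJub, hIlb, hcx4]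
end

section
/- Let a, b be real numbers with a > 0 and b > 0, and let ψ(x) := deriv (fun y => Real.log (Real.Gamma y)) x denote the digamma function. Then ∫ x in (0:ℝ)..1, x^a · (1−x)^(b−1) · log x dx = (Γ(a+1)·Γ(b)/Γ(a+b+1)) · (ψ(a+1) − ψ(a+b+1)), where powers are real powers (Real.rpow) and Γ is Real.Gamma. Equivalently, if X ~ Beta(a,b) then E[X·log X] = (a/(a+b))·(ψ(a+1) − ψ(a+b+1)). -/
/-!
The Beta integral `B(s, v) = ∫₀¹ x^(s-1) (1-x)^(v-1) dx = Γ(s) Γ(v) / Γ(s+v)` is differentiated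
in `s` under the integral sign. On the integral side `∂ₛ x^(s-1) = x^(s-1) log x`, and the
derivative is dominated near `s` because `|x^ε log x| ≤ 1/ε` on `(0, 1]`. On the Gamma side the
logarithmic derivative is `ψ(s) - ψ(s+v)`. The theorem is the case `s = a + 1`, `v = b`.
-/

open Real

/-- The digamma function `ψ(x) = (log ∘ Γ)'(x)`. -/
noncomputable def digamma (x : ℝ) : ℝ := deriv (fun y => Real.log (Real.Gamma y)) x

open MeasureTheory Set ProbabilityTheory
open scoped Interval

lemma ne_neg_natCast_of_pos {x : ℝ} (hx : 0 < x) (m : ℕ) : x ≠ -m :=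
  ((neg_nonpos.2 m.cast_nonneg).trans_lt hx).ne'

lemma hasDerivAt_Gamma_mul_digamma {x : ℝ} (hx : ∀ m : ℕ, x ≠ -m) :
    HasDerivAt Gamma (Gamma x * digamma x) x := by
  have hΓ := (differentiableAt_Gamma hx).hasDerivAt
  have hψ : digamma x = deriv Gamma x / Gamma x := (hΓ.log (Gamma_ne_zero hx)).deriv
  rwa [hψ, mul_div_cancel₀ _ (Gamma_ne_zero hx)]

lemma hasDerivAt_beta_left {s v : ℝ} (hs : ∀ m : ℕ, s ≠ -m) (hsv : ∀ m : ℕ, s + v ≠ -m) :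
    HasDerivAt (fun t => beta t v) (beta s v * (digamma s - digamma (s + v))) s := by
  have hden := (hasDerivAt_Gamma_mul_digamma hsv).comp_add_const s v
  refine (((hasDerivAt_Gamma_mul_digamma hs).mul_const (Gamma v)).div hden
    (Gamma_ne_zero hsv)).congr_deriv ?_
  rw [beta]
  field_simp

lemma rpow_mul_abs_log_le {x : ℝ} (hx₀ : 0 < x) (hx₁ : x ≤ 1) (t : ℝ) {ε : ℝ} (hε : 0 < ε) :
    x ^ t * |log x| ≤ x ^ (t - ε) / ε := by
  have hlog : |log x * x ^ ε| ≤ 1 / ε := (abs_log_mul_self_rpow_lt x ε hx₀ hx₁ hε).le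
  rw [abs_mul, abs_of_pos (rpow_pos_of_pos hx₀ ε)] at hlog
  have hsplit : x ^ t = x ^ (t - ε) * x ^ ε := by rw [← rpow_add hx₀, sub_add_cancel]
  calc x ^ t * |log x| = x ^ (t - ε) * (|log x| * x ^ ε) := by rw [hsplit]; ring
    _ ≤ x ^ (t - ε) * (1 / ε) := by gcongr
    _ = x ^ (t - ε) / ε := by rw [mul_one_div]

section BetaIntegral

variable {s v : ℝ}

lemma ofReal_betaIntegrand {x : ℝ} (hx : x ∈ Icc (0 : ℝ) 1) :
    (x : ℂ) ^ ((s : ℂ) - 1) * (1 - (x : ℂ)) ^ ((v : ℂ) - 1) =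
      ((x ^ (s - 1) * (1 - x) ^ (v - 1) : ℝ) : ℂ) := by
  rw [Complex.ofReal_mul, Complex.ofReal_cpow hx.1, Complex.ofReal_cpow (sub_nonneg.2 hx.2)]
  push_cast
  rfl

lemma intervalIntegrable_rpow_mul_one_sub_rpow (hs : 0 < s) (hv : 0 < v) :
    IntervalIntegrable (fun x : ℝ => x ^ (s - 1) * (1 - x) ^ (v - 1)) volume 0 1 := by
  refine (Complex.betaIntegral_convergent (u := s) (v := v) (by simpa) (by simpa)).norm.congr
    fun x hx => ?_
  rw [uIoc_of_le zero_le_one] at hx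
  rw [ofReal_betaIntegrand (Ioc_subset_Icc_self hx), Complex.norm_real, norm_of_nonneg]
  exact mul_nonneg (rpow_nonneg hx.1.le _) (rpow_nonneg (sub_nonneg.2 hx.2) _)

lemma integral_rpow_mul_one_sub_rpow (hs : 0 < s) (hv : 0 < v) :
    ∫ x in (0 : ℝ)..1, x ^ (s - 1) * (1 - x) ^ (v - 1) = beta s v := by
  rw [beta_eq_betaIntegralReal s v hs hv, Complex.betaIntegral,
    intervalIntegral.integral_congr fun x hx =>
      ofReal_betaIntegrand (uIcc_of_le (zero_le_one' ℝ) ▸ hx),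
    intervalIntegral.integral_ofReal, Complex.ofReal_re]

lemma norm_rpow_mul_one_sub_rpow_mul_log_le (hs : 0 < s) {x t : ℝ} (hx : x ∈ Ioc (0 : ℝ) 1)
    (ht : s / 2 ≤ t) :
    ‖x ^ (t - 1) * (1 - x) ^ (v - 1) * log x‖ ≤
      4 / s * (x ^ (s / 4 - 1) * (1 - x) ^ (v - 1)) := by
  have h1x : 0 ≤ (1 - x) ^ (v - 1) := rpow_nonneg (sub_nonneg.2 hx.2) _
  calc ‖x ^ (t - 1) * (1 - x) ^ (v - 1) * log x‖
      = x ^ (t - 1) * |log x| * (1 - x) ^ (v - 1) := by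
        rw [Real.norm_eq_abs, abs_mul, abs_mul, abs_of_pos (rpow_pos_of_pos hx.1 _),
          abs_of_nonneg h1x, mul_right_comm]
    _ ≤ x ^ (s / 2 - 1) * |log x| * (1 - x) ^ (v - 1) := by
        gcongr ?_ * _ * _
        exact rpow_le_rpow_of_exponent_ge hx.1 hx.2 (by linarith)
    _ ≤ x ^ (s / 2 - 1 - s / 4) / (s / 4) * (1 - x) ^ (v - 1) := by
        gcongr
        exact rpow_mul_abs_log_le hx.1 hx.2 _ (by positivity)
    _ = 4 / s * (x ^ (s / 4 - 1) * (1 - x) ^ (v - 1)) := by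
        rw [show s / 2 - 1 - s / 4 = s / 4 - 1 by ring]
        field_simp

lemma hasDerivAt_integral_rpow_mul_one_sub_rpow (hs : 0 < s) (hv : 0 < v) :
    HasDerivAt (fun t => ∫ x in (0 : ℝ)..1, x ^ (t - 1) * (1 - x) ^ (v - 1))
      (∫ x in (0 : ℝ)..1, x ^ (s - 1) * (1 - x) ^ (v - 1) * log x) s := by
  have hderiv : ∀ x ∈ Ι (0 : ℝ) 1, ∀ t : ℝ, HasDerivAt (fun t => x ^ (t - 1) * (1 - x) ^ (v - 1))
      (x ^ (t - 1) * (1 - x) ^ (v - 1) * log x) t := by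
    intro x hx t
    rw [uIoc_of_le zero_le_one] at hx
    exact ((((hasDerivAt_id' t).sub_const 1).const_rpow hx.1).mul_const _).congr_deriv
      (by ring)
  exact (intervalIntegral.hasDerivAt_integral_of_dominated_loc_of_deriv_le
    (Metric.ball_mem_nhds s (half_pos hs))
    (.of_forall fun t => (by fun_prop : Measurable _).aestronglyMeasurable)
    (intervalIntegrable_rpow_mul_one_sub_rpow hs hv)
    (by fun_prop : Measurable _).aestronglyMeasurable
    (.of_forall fun x hx t ht => by
      rw [uIoc_of_le zero_le_one] at hx
      rw [Metric.mem_ball, Real.dist_eq, abs_sub_lt_iff] at ht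
      exact norm_rpow_mul_one_sub_rpow_mul_log_le hs hx (by linarith))
    ((intervalIntegrable_rpow_mul_one_sub_rpow (by positivity) hv).const_mul _)
    (.of_forall fun x hx t _ => hderiv x hx t)).2

theorem integral_rpow_mul_one_sub_rpow_mul_log (hs : 0 < s) (hv : 0 < v) :
    ∫ x in (0 : ℝ)..1, x ^ (s - 1) * (1 - x) ^ (v - 1) * log x =
      beta s v * (digamma s - digamma (s + v)) := by
  refine (hasDerivAt_integral_rpow_mul_one_sub_rpow hs hv).unique <|
    (hasDerivAt_beta_left (ne_neg_natCast_of_pos hs)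
      (ne_neg_natCast_of_pos (add_pos hs hv))).congr_of_eventuallyEq ?_
  filter_upwards [eventually_gt_nhds hs] with t ht using integral_rpow_mul_one_sub_rpow ht hv

end BetaIntegral

/-- Beta-moment identity: for `a, b > 0`,
`∫₀¹ x^a (1−x)^(b−1) log x dx = (Γ(a+1)Γ(b)/Γ(a+b+1)) (ψ(a+1) − ψ(a+b+1))`;
equivalently, if `X ~ Beta(a,b)` then `E[X log X] = (a/(a+b))(ψ(a+1) − ψ(a+b+1))`. -/
theorem beta_xlogx_moment (a b : ℝ) (ha : 0 < a) (hb : 0 < b) :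
    ∫ x in (0:ℝ)..1, x ^ a * (1 - x) ^ (b - 1) * Real.log x =
      (Real.Gamma (a + 1) * Real.Gamma b / Real.Gamma (a + b + 1)) *
        (digamma (a + 1) - digamma (a + b + 1)) := by
  simpa only [add_sub_cancel_right, beta, add_right_comm a 1 b] using
    integral_rpow_mul_one_sub_rpow_mul_log (by linarith : 0 < a + 1) hb
end

section
/- Let d : ℕ with d ≥ 1 and let p : Fin d → ℝ satisfy p i > 0 for all i and Σ_i p i = 1. Let ψ(x) := deriv (fun y => Real.log (Real.Gamma y)) x denote the digamma function. Then the function α ↦ (Σ_i p i · (ψ(α·p i + 1) − ψ(α + 1) − log (p i))) − (d − 1)/(2α) is O(α⁻²) as α → ∞ (Filter.IsBigO along Filter.atTop with respect to α ↦ α⁻²). In particular, the expected Kullback–Leibler divergence of a Dirichlet(α·p) draw from p equals (d−1)/(2α) + O(α⁻²), independently of the baseline p. -/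
open Filter Real Asymptotics

/-!
Put `R(x) = ψ(x + 1) - log x - 1/(2x)`. By `ψ(x + 1) = ψ(x) + 1/x`, the increment `R(x + 1) - R(x)`
is `(u - u⁻¹)/2 - log u` at `u = 1 + 1/x`, and the elementary bounds
`(u - u⁻¹)/2 - ((u - 1)² - (1 - u⁻¹)²)/12 ≤ log u ≤ (u - u⁻¹)/2` for `u ≥ 1` say that `R` increases
along `x, x + 1, x + 2, …` while `R(x) + 1/(12x²)` decreases. Log-convexity of `Γ` puts `ψ(x + 1)`
between `log x` and `log (x + 1)`, so `R → 0`, whence `-1/(12x²) ≤ R(x) ≤ 0`. Using `∑ pᵢ = 1`, the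
expression of the theorem is `∑ pᵢ (R(α pᵢ) - R(α))`, which is therefore `O(α⁻²)`.
-/

open Topology

lemma differentiableAt_log_Gamma {x : ℝ} (hx : 0 < x) :
    DifferentiableAt ℝ (fun y => log (Gamma y)) x :=
  (differentiableAt_Gamma fun m h => by linarith [(m.cast_nonneg : (0 : ℝ) ≤ m)]).log
    (Gamma_pos_of_pos hx).ne'

lemma digamma_add_one {x : ℝ} (hx : 0 < x) : digamma (x + 1) = digamma x + x⁻¹ := by
  have hfe : (fun y => log (Gamma (y + 1))) =ᶠ[𝓝 x] fun y => log (Gamma y) + log y := by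
    filter_upwards [eventually_gt_nhds hx] with y hy
    rw [Gamma_add_one hy.ne', log_mul hy.ne' (Gamma_pos_of_pos hy).ne', add_comm]
  have h := hfe.deriv_eq
  rwa [deriv_comp_add_const (fun y => log (Gamma y)),
    deriv_fun_add (differentiableAt_log_Gamma hx) (differentiableAt_log hx.ne'), deriv_log] at h

lemma slope_log_Gamma {x : ℝ} (hx : 0 < x) : slope (log ∘ Gamma) x (x + 1) = log x := by
  rw [slope_def_field, Function.comp_apply, Function.comp_apply, Gamma_add_one hx.ne',
    log_mul hx.ne' (Gamma_pos_of_pos hx).ne']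
  ring

lemma log_le_digamma_add_one {x : ℝ} (hx : 0 < x) : log x ≤ digamma (x + 1) :=
  slope_log_Gamma hx ▸ convexOn_log_Gamma.slope_le_deriv hx (Set.mem_Ioi.2 (by linarith))
    (lt_add_one x) (differentiableAt_log_Gamma (by linarith))

lemma digamma_add_one_le_log {x : ℝ} (hx : 0 < x) : digamma (x + 1) ≤ log (x + 1) :=
  slope_log_Gamma (x := x + 1) (by linarith) ▸ convexOn_log_Gamma.deriv_le_slope
    (Set.mem_Ioi.2 (by linarith)) (Set.mem_Ioi.2 (by linarith)) (lt_add_one _)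
    (differentiableAt_log_Gamma (by linarith))

lemma log_le_half_sub_inv {x : ℝ} (hx : 1 ≤ x) : log x ≤ (x - x⁻¹) / 2 :=
  sinh_log (by linarith) ▸ self_le_sinh_iff.2 (log_nonneg hx)

lemma half_sub_inv_sub_le_log {x : ℝ} (hx : 1 ≤ x) :
    (x - x⁻¹) / 2 - ((x - 1) ^ 2 - (1 - x⁻¹) ^ 2) / 12 ≤ log x := by
  let V : ℝ → ℝ := fun y => log y - (y - y⁻¹) / 2 + ((y - 1) ^ 2 - (1 - y⁻¹) ^ 2) / 12
  have hV : ∀ y, 0 < y → HasDerivAt V ((y - 1) ^ 4 / (6 * y ^ 3)) y := by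
    intro y hy
    have hlog := hasDerivAt_log hy.ne'
    have hsinh := ((hasDerivAt_id y).sub (hasDerivAt_inv hy.ne')).div_const 2
    have hsq := ((((hasDerivAt_id y).sub_const 1).pow 2).sub
      (((hasDerivAt_const y (1 : ℝ)).sub (hasDerivAt_inv hy.ne')).pow 2)).div_const 12
    refine ((hlog.sub hsinh).add hsq).congr_deriv ?_
    simp only [id, Pi.sub_apply, Nat.cast_ofNat, Nat.add_one_sub_one, pow_one]
    field_simp
    ring
  have hmono : MonotoneOn V (Set.Ici 1) := by
    refine monotoneOn_of_deriv_nonneg (convex_Ici 1) ?_ ?_ ?_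
    · exact fun y hy => (hV y (zero_lt_one.trans_le hy)).continuousAt.continuousWithinAt
    · rw [interior_Ici]
      exact fun y hy => (hV y (zero_lt_one.trans hy)).differentiableAt.differentiableWithinAt
    · rw [interior_Ici]
      intro y hy
      have hy0 : 0 < y := zero_lt_one.trans hy
      rw [(hV y hy0).deriv]
      positivity
  have := hmono (Set.mem_Ici.2 le_rfl) hx hx
  simp only [V, log_one, inv_one, sub_self] at this
  linarith

lemma le_of_le_add_one_of_tendsto {f : ℝ → ℝ} {x L : ℝ} (hf : ∀ y ≥ x, f y ≤ f (y + 1))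
    (hL : Tendsto f atTop (𝓝 L)) : f x ≤ L := by
  have hmono : Monotone fun n : ℕ => f (x + n) := monotone_nat_of_le_succ fun n => by
    simpa [add_assoc] using hf (x + n) (by simp)
  simpa using hmono.ge_of_tendsto (hL.comp (tendsto_atTop_add_const_left _ x
    tendsto_natCast_atTop_atTop)) 0

noncomputable def digammaRemainder (x : ℝ) : ℝ := digamma (x + 1) - log x - 1 / (2 * x)

lemma digammaRemainder_add_one_sub {x : ℝ} (hx : 0 < x) :
    digammaRemainder (x + 1) - digammaRemainder x =
      (1 + 1 / x - (1 + 1 / x)⁻¹) / 2 - log (1 + 1 / x) := by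
  have hx1 : 0 < x + 1 := by linarith
  rw [digammaRemainder, digammaRemainder, digamma_add_one hx1,
    show 1 + 1 / x = (x + 1) / x by field_simp, log_div hx1.ne' hx.ne']
  field_simp
  ring

lemma digammaRemainder_le_add_one {x : ℝ} (hx : 0 < x) :
    digammaRemainder x ≤ digammaRemainder (x + 1) := by
  linarith [digammaRemainder_add_one_sub hx,
    log_le_half_sub_inv (le_add_of_nonneg_right (one_div_pos.2 hx).le)]

lemma digammaRemainder_add_one_le {x : ℝ} (hx : 0 < x) :
    digammaRemainder (x + 1) + 1 / (12 * (x + 1) ^ 2) ≤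
      digammaRemainder x + 1 / (12 * x ^ 2) := by
  have hlog := half_sub_inv_sub_le_log (le_add_of_nonneg_right (one_div_pos.2 hx).le)
  have hsq : ((1 + 1 / x - 1) ^ 2 - (1 - (1 + 1 / x)⁻¹) ^ 2) / 12 =
      1 / (12 * x ^ 2) - 1 / (12 * (x + 1) ^ 2) := by
    field_simp
    ring
  linarith [digammaRemainder_add_one_sub hx]

lemma abs_digammaRemainder_le_half_inv {x : ℝ} (hx : 0 < x) :
    |digammaRemainder x| ≤ 1 / (2 * x) := by
  have hlow := log_le_digamma_add_one hx
  have hup := digamma_add_one_le_log hx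
  have hlog : log (x + 1) - log x ≤ 1 / x := by
    rw [← log_div (by linarith) hx.ne']
    linarith [log_le_sub_one_of_pos (x := (x + 1) / x) (by positivity),
      show (x + 1) / x - 1 = 1 / x by field_simp; ring]
  have hhalf : 1 / x = 2 * (1 / (2 * x)) := by field_simp
  rw [abs_le, digammaRemainder]
  constructor <;> linarith

lemma tendsto_digammaRemainder : Tendsto digammaRemainder atTop (𝓝 0) := by
  refine squeeze_zero_norm' ?_ ((tendsto_const_nhds.div_atTop
    (tendsto_id.const_mul_atTop two_pos)) : Tendsto (fun x : ℝ => 1 / (2 * x)) atTop (𝓝 0))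
  filter_upwards [eventually_gt_atTop 0] with x hx
  exact abs_digammaRemainder_le_half_inv hx

theorem abs_digammaRemainder_le {x : ℝ} (hx : 0 < x) :
    |digammaRemainder x| ≤ 1 / (12 * x ^ 2) := by
  have hup : digammaRemainder x ≤ 0 :=
    le_of_le_add_one_of_tendsto (fun y hy => digammaRemainder_le_add_one (hx.trans_le hy))
      tendsto_digammaRemainder
  have hlow : -(digammaRemainder x + 1 / (12 * x ^ 2)) ≤ -(0 + 0) :=
    le_of_le_add_one_of_tendsto (f := fun y => -(digammaRemainder y + 1 / (12 * y ^ 2)))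
      (fun y hy => by linarith [digammaRemainder_add_one_le (hx.trans_le hy)])
      (tendsto_digammaRemainder.add (tendsto_const_nhds.div_atTop
        ((tendsto_pow_atTop two_ne_zero).const_mul_atTop (by norm_num)))).neg
  rw [abs_le]
  constructor <;> linarith

lemma sum_mul_digamma_sub_eq {ι : Type*} [Fintype ι] {p : ι → ℝ} (hp : ∀ i, 0 < p i)
    (hsum : ∑ i, p i = 1) {α : ℝ} (hα : 0 < α) :
    ∑ i, p i * (digamma (α * p i + 1) - digamma (α + 1) - log (p i)) -
        ((Fintype.card ι : ℝ) - 1) / (2 * α) =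
      ∑ i, p i * (digammaRemainder (α * p i) - digammaRemainder α) := by
  have hterm : ∀ i, p i * (digamma (α * p i + 1) - digamma (α + 1) - log (p i)) =
      p i * (digammaRemainder (α * p i) - digammaRemainder α) + (1 - p i) / (2 * α) := by
    intro i
    rw [digammaRemainder, digammaRemainder, log_mul hα.ne' (hp i).ne']
    field_simp [(hp i).ne']
    ring
  rw [Finset.sum_congr rfl fun i _ => hterm i, Finset.sum_add_distrib, ← Finset.sum_div,
    Finset.sum_sub_distrib, hsum, Finset.sum_const, Finset.card_univ, nsmul_eq_mul, mul_one]
  ring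

lemma abs_mul_digammaRemainder_sub_le {a α : ℝ} (ha : 0 < a) (hα : 0 < α) :
    |a * (digammaRemainder (α * a) - digammaRemainder α)| ≤ (a⁻¹ + a) / (12 * α ^ 2) :=
  calc |a * (digammaRemainder (α * a) - digammaRemainder α)|
      ≤ a * (|digammaRemainder (α * a)| + |digammaRemainder α|) := by
        rw [abs_mul, abs_of_pos ha]
        exact mul_le_mul_of_nonneg_left (abs_sub _ _) ha.le
    _ ≤ a * (1 / (12 * (α * a) ^ 2) + 1 / (12 * α ^ 2)) := by
        gcongr
        exacts [abs_digammaRemainder_le (by positivity), abs_digammaRemainder_le hα]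
    _ = (a⁻¹ + a) / (12 * α ^ 2) := by
        field_simp

theorem dirichlet_expected_kl_asymptotics_general (d : ℕ) (p : Fin d → ℝ)
    (hp : ∀ i, 0 < p i) (hsum : ∑ i, p i = 1) :
    (fun α : ℝ =>
        (∑ i, p i * (digamma (α * p i + 1) - digamma (α + 1) - Real.log (p i))) -
          ((d : ℝ) - 1) / (2 * α))
      =O[atTop] (fun α : ℝ => (α ^ 2)⁻¹) := by
  refine IsBigO.of_bound ((∑ i, (p i)⁻¹ + 1) / 12) ?_
  filter_upwards [eventually_gt_atTop 0] with α hα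
  have hsplit := sum_mul_digamma_sub_eq hp hsum hα
  rw [Fintype.card_fin] at hsplit
  rw [hsplit, norm_inv, norm_pow, norm_eq_abs, norm_eq_abs, abs_of_pos hα]
  calc |∑ i, p i * (digammaRemainder (α * p i) - digammaRemainder α)|
      ≤ ∑ i, |p i * (digammaRemainder (α * p i) - digammaRemainder α)| :=
        Finset.abs_sum_le_sum_abs _ _
    _ ≤ ∑ i, ((p i)⁻¹ + p i) / (12 * α ^ 2) :=
        Finset.sum_le_sum fun i _ => abs_mul_digammaRemainder_sub_le (hp i) hα
    _ = (∑ i, (p i)⁻¹ + 1) / 12 * (α ^ 2)⁻¹ := by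
        rw [← Finset.sum_div, Finset.sum_add_distrib, hsum]
        field_simp

/-- Large-`α` asymptotics of the expected KL divergence of a `Dirichlet(α p)` draw from `p`:
`Σ_i p_i (ψ(α p_i + 1) − ψ(α + 1) − log p_i) = (d−1)/(2α) + O(α⁻²)` as `α → ∞`. -/
theorem dirichlet_expected_kl_asymptotics (d : ℕ) (hd : 1 ≤ d) (p : Fin d → ℝ)
    (hp : ∀ i, 0 < p i) (hsum : ∑ i, p i = 1) :
    (fun α : ℝ =>
        (∑ i, p i * (digamma (α * p i + 1) - digamma (α + 1) - Real.log (p i))) -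
          ((d : ℝ) - 1) / (2 * α))
      =O[atTop] (fun α : ℝ => (α ^ 2)⁻¹) :=
  dirichlet_expected_kl_asymptotics_general d p hp hsum
end

section
/- Let S : ℕ with S ≥ 1, let w : Fin S → ℝ satisfy w s > 0 for all s and Σ_s w s = 1, let L : Fin S → ℝ, and let C > 0. Define KL(q‖w) := Σ_s q s · log (q s / w s) for q in the simplex {q : Fin S → ℝ | ∀ s, 0 ≤ q s, and Σ_s q s = 1} (with the Lean convention Real.log 0 = 0, so terms with q s = 0 vanish). Then sSup { Σ_s q s · L s : q in the simplex with KL(q‖w) ≤ C } = ⨅ (λ : ℝ) (hλ : 0 < λ), (C + log (Σ_s w s · exp(λ · L s))) / λ. Moreover the least-favorable weights have the entropic-tilting form q_s ∝ w_s · exp(λ·L_s). -/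
open Real

/-- Discrete Kullback--Leibler divergence `KL(q‖w) = Σ_s q_s log(q_s / w_s)`
(with the convention `Real.log 0 = 0`, so terms with `q s = 0` vanish). -/
noncomputable def dKL {S : ℕ} (q w : Fin S → ℝ) : ℝ :=
  ∑ s, q s * Real.log (q s / w s)

/-- Entropically tilted weights `q_s ∝ w_s exp(λ L_s)`. -/
noncomputable def tiltWeights {S : ℕ} (w L : Fin S → ℝ) (l : ℝ) : Fin S → ℝ :=
  fun s => w s * Real.exp (l * L s) / ∑ r, w r * Real.exp (l * L r)

/-!
Write `Z(λ) = Σ_s w_s e^{λ L_s}` and `q^λ` for the tilted weights. For every `q` with total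
mass one, `KL(q‖q^λ) = KL(q‖w) - λ Σ_s q_s L_s + log Z(λ)`, so Gibbs' inequality
`KL(q‖q^λ) ≥ 0` gives weak duality `Σ_s q_s L_s ≤ (C + log Z(λ)) / λ` on the KL ball.
At `q = q^λ` the duality gap is exactly `(C - KL(q^λ‖w)) / λ`. The map `λ ↦ KL(q^λ‖w)` is
continuous, nonnegative and vanishes at `0`, so by the intermediate value theorem every
`ε > 0` admits a `λ > 0` for which `q^λ` lies in the ball and the gap is at most `ε`.
-/

open InformationTheory

section Gibbs

variable {S : ℕ}

lemma sum_sub_sum_le_dKL {q p : Fin S → ℝ} (hq : ∀ s, 0 ≤ q s) (hp : ∀ s, 0 < p s) :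
    ∑ s, q s - ∑ s, p s ≤ dKL q p := by
  rw [← Finset.sum_sub_distrib, dKL]
  refine Finset.sum_le_sum fun s _ => ?_
  have hklFun : p s * klFun (q s / p s) = q s * log (q s / p s) - (q s - p s) := by
    have := (hp s).ne'
    rw [klFun_apply]
    field_simp
    ring
  linarith [mul_nonneg (hp s).le (klFun_nonneg (div_nonneg (hq s) (hp s).le))]

lemma dKL_nonneg {q p : Fin S → ℝ} (hq : ∀ s, 0 ≤ q s) (hp : ∀ s, 0 < p s)
    (hq1 : ∑ s, q s = 1) (hp1 : ∑ s, p s = 1) : 0 ≤ dKL q p := by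
  simpa [hq1, hp1] using sum_sub_sum_le_dKL hq hp

@[simp]
lemma dKL_self (p : Fin S → ℝ) : dKL p p = 0 :=
  Finset.sum_eq_zero fun s _ => by rcases eq_or_ne (p s) 0 with h | h <;> simp [h]

end Gibbs

lemma exists_pos_le_and_sub_div_le {g : ℝ → ℝ} (hg : Continuous g) (hg_nonneg : ∀ l, 0 ≤ g l)
    {C ε : ℝ} (hg0 : g 0 < C) (hε : 0 < ε) : ∃ l, 0 < l ∧ g l ≤ C ∧ (C - g l) / l ≤ ε := by
  have hC : 0 < C := (hg_nonneg 0).trans_lt hg0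
  by_cases hle : g (C / ε) ≤ C
  · refine ⟨C / ε, by positivity, hle, ?_⟩
    calc (C - g (C / ε)) / (C / ε) ≤ C / (C / ε) := by
          gcongr
          linarith [hg_nonneg (C / ε)]
      _ = ε := by field_simp
  · obtain ⟨l, hl, hgl⟩ := intermediate_value_Icc (by positivity : (0 : ℝ) ≤ C / ε)
      hg.continuousOn ⟨hg0.le, (not_le.mp hle).le⟩
    have hl0 : l ≠ 0 := by
      rintro rfl
      exact hg0.ne hgl
    exact ⟨l, lt_of_le_of_ne hl.1 (Ne.symm hl0), hgl.le, by simp [hgl, hε.le]⟩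

lemma csSup_eq_csInf_of_forall_le_of_approx {s t : Set ℝ} (hs : s.Nonempty) (ht : t.Nonempty)
    (hst : ∀ a ∈ s, ∀ b ∈ t, a ≤ b) (happrox : ∀ ε > 0, ∃ a ∈ s, ∃ b ∈ t, b ≤ a + ε) :
    sSup s = sInf t := by
  obtain ⟨a₀, ha₀⟩ := hs
  obtain ⟨b₀, hb₀⟩ := ht
  refine le_antisymm (le_csInf ⟨b₀, hb₀⟩ fun b hb => csSup_le ⟨a₀, ha₀⟩ fun a ha => hst a ha b hb)
    (le_of_forall_pos_le_add fun ε hε => ?_)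
  obtain ⟨a, ha, b, hb, hba⟩ := happrox ε hε
  linarith [csInf_le ⟨a₀, fun b hb => hst a₀ ha₀ b hb⟩ hb,
    le_csSup ⟨b₀, fun a ha => hst a ha b₀ hb₀⟩ ha]

lemma tiltWeights_zero {S : ℕ} {w : Fin S → ℝ} (L : Fin S → ℝ) (hw1 : ∑ s, w s = 1) :
    tiltWeights w L 0 = w := by
  funext s
  simp [tiltWeights, hw1]

section Tilt

variable {S : ℕ} [Nonempty (Fin S)] {w : Fin S → ℝ} (L : Fin S → ℝ) (hw : ∀ s, 0 < w s)
include hw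

lemma sum_mul_exp_pos (l : ℝ) : 0 < ∑ s, w s * exp (l * L s) :=
  Finset.sum_pos (fun s _ => by have := hw s; positivity) Finset.univ_nonempty

lemma tiltWeights_pos (l : ℝ) (s : Fin S) : 0 < tiltWeights w L l s := by
  have := sum_mul_exp_pos L hw l
  have := hw s
  unfold tiltWeights
  positivity

lemma sum_tiltWeights (l : ℝ) : ∑ s, tiltWeights w L l s = 1 := by
  simp only [tiltWeights]
  rw [← Finset.sum_div, div_self (sum_mul_exp_pos L hw l).ne']

lemma dKL_tiltWeights (l : ℝ) {q : Fin S → ℝ} (hq1 : ∑ s, q s = 1) :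
    dKL q (tiltWeights w L l) =
      dKL q w - l * ∑ s, q s * L s + log (∑ s, w s * exp (l * L s)) := by
  have hZ := (sum_mul_exp_pos L hw l).ne'
  have hterm (s : Fin S) : q s * log (q s / tiltWeights w L l s) =
      q s * log (q s / w s) - l * (q s * L s) + q s * log (∑ r, w r * exp (l * L r)) := by
    rcases eq_or_ne (q s) 0 with h | h
    · simp [h]
    have hw' := (hw s).ne'
    have hqt : q s / tiltWeights w L l s =
        q s / w s * (∑ r, w r * exp (l * L r)) / exp (l * L s) := by
      simp only [tiltWeights]
      field_simp
    rw [hqt, log_div (by positivity) (exp_pos _).ne', log_mul (by positivity) hZ, log_exp]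
    ring
  simp only [dKL, hterm, Finset.sum_add_distrib, Finset.sum_sub_distrib, ← Finset.mul_sum,
    ← Finset.sum_mul, hq1, one_mul]

lemma dKL_tiltWeights_self (l : ℝ) :
    dKL (tiltWeights w L l) w =
      l * ∑ s, tiltWeights w L l s * L s - log (∑ s, w s * exp (l * L s)) := by
  have := dKL_tiltWeights L hw l (sum_tiltWeights L hw l)
  rw [dKL_self] at this
  linarith

lemma sum_mul_le_of_dKL_le {q : Fin S → ℝ} (hq : ∀ s, 0 ≤ q s) (hq1 : ∑ s, q s = 1) {C : ℝ}
    (hqC : dKL q w ≤ C) {l : ℝ} (hl : 0 < l) :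
    ∑ s, q s * L s ≤ (C + log (∑ s, w s * exp (l * L s))) / l := by
  have := dKL_nonneg hq (tiltWeights_pos L hw l) hq1 (sum_tiltWeights L hw l)
  rw [dKL_tiltWeights L hw l hq1] at this
  rw [le_div_iff₀ hl]
  linarith

lemma continuous_tiltWeights (s : Fin S) : Continuous fun l => tiltWeights w L l s := by
  unfold tiltWeights
  exact Continuous.div (by fun_prop) (by fun_prop) fun l => (sum_mul_exp_pos L hw l).ne'

lemma continuous_dKL_tiltWeights : Continuous fun l => dKL (tiltWeights w L l) w := by
  unfold dKL
  have := continuous_tiltWeights L hw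
  refine continuous_finsetSum _ fun s _ => (this s).mul ((this s).div_const _ |>.log fun l => ?_)
  exact (div_pos (tiltWeights_pos L hw l s) (hw s)).ne'

lemma exists_tiltWeights_dual_le (hw1 : ∑ s, w s = 1) {C ε : ℝ} (hC : 0 < C) (hε : 0 < ε) :
    ∃ l, 0 < l ∧ dKL (tiltWeights w L l) w ≤ C ∧
      (C + log (∑ s, w s * exp (l * L s))) / l ≤ ∑ s, tiltWeights w L l s * L s + ε := by
  obtain ⟨l, hl, hfeas, hgap⟩ := exists_pos_le_and_sub_div_le (continuous_dKL_tiltWeights L hw)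
    (fun l => dKL_nonneg (fun s => (tiltWeights_pos L hw l s).le) hw (sum_tiltWeights L hw l) hw1)
    (by simpa [tiltWeights_zero L hw1] using hC) hε
  refine ⟨l, hl, hfeas, ?_⟩
  have hdual : (C + log (∑ s, w s * exp (l * L s))) / l =
      ∑ s, tiltWeights w L l s * L s + (C - dKL (tiltWeights w L l) w) / l := by
    rw [dKL_tiltWeights_self L hw]
    field_simp
    ring
  linarith

end Tilt

theorem entropic_tilting_duality_general (S : ℕ) (w : Fin S → ℝ)
    (hw : ∀ s, 0 < w s) (hwsum : ∑ s, w s = 1) (L : Fin S → ℝ) (C : ℝ) (hC : 0 < C) :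
    sSup { x : ℝ | ∃ q : Fin S → ℝ, (∀ s, 0 ≤ q s) ∧ (∑ s, q s = 1) ∧
          dKL q w ≤ C ∧ x = ∑ s, q s * L s } =
        sInf ((fun l : ℝ => (C + Real.log (∑ s, w s * Real.exp (l * L s))) / l) ''
          Set.Ioi 0) ∧
      ∀ ε > 0, ∃ l : ℝ, dKL (tiltWeights w L l) w ≤ C ∧
        sSup { x : ℝ | ∃ q : Fin S → ℝ, (∀ s, 0 ≤ q s) ∧ (∑ s, q s = 1) ∧
            dKL q w ≤ C ∧ x = ∑ s, q s * L s } ≤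
          (∑ s, tiltWeights w L l s * L s) + ε := by
  have : Nonempty (Fin S) :=
    Finset.univ_nonempty_iff.mp (Finset.nonempty_of_sum_ne_zero (hwsum ▸ one_ne_zero))
  set P := { x : ℝ | ∃ q : Fin S → ℝ, (∀ s, 0 ≤ q s) ∧ (∑ s, q s = 1) ∧
      dKL q w ≤ C ∧ x = ∑ s, q s * L s }
  set D := (fun l : ℝ => (C + log (∑ s, w s * exp (l * L s))) / l) '' Set.Ioi 0
  have hweak : ∀ x ∈ P, ∀ d ∈ D, x ≤ d := by
    rintro _ ⟨q, hq, hq1, hqC, rfl⟩ _ ⟨l, hl, rfl⟩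
    exact sum_mul_le_of_dKL_le L hw hq hq1 hqC hl
  have hwP : ∑ s, w s * L s ∈ P := ⟨w, fun s => (hw s).le, hwsum, by simpa using hC.le, rfl⟩
  have htilt (ε : ℝ) (hε : 0 < ε) : ∃ l, dKL (tiltWeights w L l) w ≤ C ∧
      ∑ s, tiltWeights w L l s * L s ∈ P ∧ ∃ d ∈ D, d ≤ ∑ s, tiltWeights w L l s * L s + ε := by
    obtain ⟨l, hl, hfeas, hdual⟩ := exists_tiltWeights_dual_le L hw hwsum hC hε
    exact ⟨l, hfeas, ⟨_, fun s => (tiltWeights_pos L hw l s).le, sum_tiltWeights L hw l, hfeas,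
      rfl⟩, _, ⟨l, hl, rfl⟩, hdual⟩
  have hPD : sSup P = sInf D :=
    csSup_eq_csInf_of_forall_le_of_approx ⟨_, hwP⟩ ((Set.nonempty_Ioi (a := (0 : ℝ))).image _)
      hweak fun ε hε => by
        obtain ⟨l, -, hP, hD⟩ := htilt ε hε
        exact ⟨_, hP, hD⟩
  refine ⟨hPD, fun ε hε => ?_⟩
  obtain ⟨l, hfeas, -, d, hd, hdle⟩ := htilt ε hε
  exact ⟨l, hfeas, hPD ▸ (csInf_le ⟨_, hweak _ hwP⟩ hd).trans hdle⟩

/-- Entropic-tilting (Donsker–Varadhan) duality for the worst-case risk over a discrete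
KL ball: the supremum of `Σ_s q_s L_s` over the simplex with `KL(q‖w) ≤ C` equals
`inf_{λ>0} (C + log Σ_s w_s e^{λ L_s}) / λ`, and the supremum is approached by weights of
the entropic-tilting form `q_s ∝ w_s e^{λ L_s}`. -/
theorem entropic_tilting_duality (S : ℕ) (hS : 1 ≤ S) (w : Fin S → ℝ)
    (hw : ∀ s, 0 < w s) (hwsum : ∑ s, w s = 1) (L : Fin S → ℝ) (C : ℝ) (hC : 0 < C) :
    sSup { x : ℝ | ∃ q : Fin S → ℝ, (∀ s, 0 ≤ q s) ∧ (∑ s, q s = 1) ∧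
          dKL q w ≤ C ∧ x = ∑ s, q s * L s } =
        sInf ((fun l : ℝ => (C + Real.log (∑ s, w s * Real.exp (l * L s))) / l) ''
          Set.Ioi 0) ∧
      ∀ ε > 0, ∃ l : ℝ, dKL (tiltWeights w L l) w ≤ C ∧
        sSup { x : ℝ | ∃ q : Fin S → ℝ, (∀ s, 0 ≤ q s) ∧ (∑ s, q s = 1) ∧
            dKL q w ≤ C ∧ x = ∑ s, q s * L s } ≤
          (∑ s, tiltWeights w L l s * L s) + ε :=
  entropic_tilting_duality_general S w hw hwsum L C hC
end
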